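/- arXiv:2002.02554 — 4 statements merged into one kernel-verified Lean document; each statement's English description precedes it below -/
import Mathlib

section
/- In a cartesian differential category, each n-th derivative f^{(n)} : A × Aⁿ → B is recovered from the iterated differential by f^{(n)}(y) = (Dⁿ f)(y°), where y° : X → A^(2ⁿ) has y°_∅ = π₀ y, y°_{k} = π_k y for singletons {k}, and y°_I = 0 for |I| ≥ 2. -/
universe u

open Finset

/-- Unordered partitions of `Fin n` into nonempty parts, as a `Finset`. -/
def partitions (n : ℕ) : Finset (Finset (Finset (Fin n))) :=
  Finset.univ.filter fun P =>
    (∅ ∉ P) ∧ ∀ i : Fin n, (P.filter fun s => i ∈ s).card = 1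

/-- Partial injections from `Fin m` to `Fin n` (partial isomorphisms `[m] ≃ [n]`). -/
def partialInjs (m n : ℕ) : Finset (Fin m → Option (Fin n)) :=
  Finset.univ.filter fun θ =>
    ∀ i j : Fin m, ∀ a : Fin n, θ i = some a → θ j = some a → i = j

/-- The arrangement (Notation 5) associated to a partial isomorphism `θ : [m] ≃ [n]`:
the tail of the list `x_{θ₍₁₎θ₍₂₎}`, i.e. everything after the leading entry `(0,0)`:
matched pairs `(i, θ i)`, then unmatched rows `(i, 0)`, then unmatched columns `(0, j)`. -/
def arrangeTail (m n : ℕ) (θ : Fin m → Option (Fin n)) :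
    List (Fin (m + 1) × Fin (n + 1)) :=
  ((List.finRange m).filterMap fun i => (θ i).map fun j => (i.succ, j.succ))
    ++ ((List.finRange m).filterMap fun i =>
          if θ i = none then some (i.succ, (0 : Fin (n + 1))) else none)
    ++ ((List.finRange n).filterMap fun j =>
          if ∀ i, θ i ≠ some j then some ((0 : Fin (m + 1)), j.succ) else none)

variable (k : Type u) [CommSemiring k]

/-- The data of a cartesian left-`k`-linear category. -/
structure CDCData where
  Obj : Type u
  Hom : Obj → Obj → Type u
  homAdd : ∀ A B, AddCommMonoid (Hom A B)
  homMod : ∀ A B, @Module k (Hom A B) inferInstance (homAdd A B)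
  id : ∀ A, Hom A A
  comp : ∀ {A B C}, Hom B C → Hom A B → Hom A C
  term : Obj
  toTerm : ∀ A, Hom A term
  prod : Obj → Obj → Obj
  fst : ∀ {A B}, Hom (prod A B) A
  snd : ∀ {A B}, Hom (prod A B) B
  pair : ∀ {Z A B}, Hom Z A → Hom Z B → Hom Z (prod A B)

variable {k}

instance (C : CDCData k) (A B : C.Obj) : AddCommMonoid (C.Hom A B) := C.homAdd A B
instance (C : CDCData k) (A B : C.Obj) : Module k (C.Hom A B) := C.homMod A B

namespace CDCData

/-- `dom A n` is the `(n+1)`-fold product `A × Aⁿ`, nested on the left. -/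
def dom (C : CDCData k) (A : C.Obj) : ℕ → C.Obj
  | 0 => A
  | n + 1 => C.prod (dom C A n) A

/-- Tupling of `n+1` generalized elements of `A` into `A × Aⁿ`. -/
def tupleD (C : CDCData k) {Z A : C.Obj} :
    (n : ℕ) → (Fin (n + 1) → C.Hom Z A) → C.Hom Z (C.dom A n)
  | 0, x => x 0
  | n + 1, x => C.pair (tupleD C n fun i => x i.castSucc) (x (Fin.last (n + 1)))

/-- Tupling of a head together with a list; the head of the list lands in the
*last* slot. -/
def tupList (C : CDCData k) {Z A : C.Obj} (x0 : C.Hom Z A) :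
    (L : List (C.Hom Z A)) → C.Hom Z (C.dom A L.length)
  | [] => x0
  | a :: L => C.pair (tupList C x0 L) a

/-- Zero-padding `v` into the first slot of `A × Aⁿ`. -/
def zpad (C : CDCData k) {Z A : C.Obj} : (n : ℕ) → C.Hom Z A → C.Hom Z (C.dom A n)
  | 0, v => v
  | n + 1, v => C.pair (zpad C n v) 0

/-- The `i`-th projection `A × Aⁿ → A`. -/
def projD (C : CDCData k) {A : C.Obj} : (n : ℕ) → Fin (n + 1) → C.Hom (C.dom A n) A
  | 0, _ => C.id A
  | n + 1, i => Fin.lastCases C.snd (fun j => C.comp (projD C n j) C.fst) i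

/-- The `2ⁿ`-fold product of `A`. -/
def twoPow (C : CDCData k) (A : C.Obj) : ℕ → C.Obj
  | 0 => A
  | n + 1 => C.prod (twoPow C A n) (twoPow C A n)

/-- Tupling of a family indexed by `Fin n → Bool` (characteristic functions of
subsets of `[n]`) into `A^(2ⁿ)`; the last bit is the outermost product factor. -/
def cube (C : CDCData k) {Z A : C.Obj} :
    (n : ℕ) → ((Fin n → Bool) → C.Hom Z A) → C.Hom Z (C.twoPow A n)
  | 0, x => x fun i => i.elim0
  | n + 1, x =>
      C.pair (cube C n fun b => x (Fin.snoc b false))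
        (cube C n fun b => x (Fin.snoc b true))

/-- The subset of `Fin n` with characteristic function `b`. -/
def bset {n : ℕ} (b : Fin n → Bool) : Finset (Fin n) :=
  Finset.univ.filter fun i => b i = true

end CDCData

variable (k)

/-- A (`k`-linear) cartesian differential category, presented via generalized
elements. -/
structure CDC extends CDCData k where
  id_comp : ∀ {A B} (f : Hom A B), comp (id B) f = f
  comp_id : ∀ {A B} (f : Hom A B), comp f (id A) = f
  comp_assoc : ∀ {A B C D} (h : Hom C D) (g : Hom B C) (f : Hom A B),
    comp (comp h g) f = comp h (comp g f)
  -- left `k`-linearity: precomposition is `k`-linear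
  add_comp : ∀ {A B C} (g h : Hom B C) (f : Hom A B),
    comp (g + h) f = comp g f + comp h f
  smul_comp : ∀ {A B C} (r : k) (g : Hom B C) (f : Hom A B),
    comp (r • g) f = r • comp g f
  zero_comp : ∀ {A B C} (f : Hom A B), comp (0 : Hom B C) f = (0 : Hom A C)
  -- cartesian structure
  toTerm_unique : ∀ {A} (f : Hom A term), f = toTerm A
  fst_pair : ∀ {Z A B} (f : Hom Z A) (g : Hom Z B), comp fst (pair f g) = f
  snd_pair : ∀ {Z A B} (f : Hom Z A) (g : Hom Z B), comp snd (pair f g) = g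
  pair_unique : ∀ {Z A B} (h : Hom Z (prod A B)), pair (comp fst h) (comp snd h) = h
  -- the projections are `k`-linear
  fst_comp_add : ∀ {Z A B} (x y : Hom Z (prod A B)),
    comp fst (x + y) = comp fst x + comp fst y
  fst_comp_smul : ∀ {Z A B} (r : k) (x : Hom Z (prod A B)),
    comp fst (r • x) = r • comp fst x
  snd_comp_add : ∀ {Z A B} (x y : Hom Z (prod A B)),
    comp snd (x + y) = comp snd x + comp snd y
  snd_comp_smul : ∀ {Z A B} (r : k) (x : Hom Z (prod A B)),
    comp snd (r • x) = r • comp snd x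
  -- the differential operator
  D : ∀ {A B}, Hom A B → Hom (prod A A) B
  -- (i) D is k-linear
  D_add : ∀ {A B} (f g : Hom A B), D (f + g) = D f + D g
  D_smul : ∀ {A B} (r : k) (f : Hom A B), D (r • f) = r • D f
  -- (ii) D f is k-linear in its second argument
  D_arg_add : ∀ {Z A B} (f : Hom A B) (x u v : Hom Z A),
    comp (D f) (pair x (u + v)) = comp (D f) (pair x u) + comp (D f) (pair x v)
  D_arg_smul : ∀ {Z A B} (f : Hom A B) (r : k) (x u : Hom Z A),
    comp (D f) (pair x (r • u)) = r • comp (D f) (pair x u)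
  -- (iii) D of projections
  D_fst : ∀ {A B}, D (fst (A := A) (B := B)) = comp fst snd
  D_snd : ∀ {A B}, D (snd (A := A) (B := B)) = comp snd snd
  -- (iv) D of identities
  D_id : ∀ {A}, D (id A) = snd
  -- (v) the chain rule
  D_comp : ∀ {A B C} (g : Hom B C) (f : Hom A B),
    D (comp g f) = comp (D g) (pair (comp f fst) (D f))
  -- (vi) D f is D-linear in its first argument
  D_lin : ∀ {Z A B} (f : Hom A B) (x r v : Hom Z A),
    comp (D (D f)) (pair (pair x r) (pair 0 v)) = comp (D f) (pair x v)
  -- (vii) symmetry of the second derivative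
  D_sym : ∀ {Z A B} (f : Hom A B) (x r s : Hom Z A),
    comp (D (D f)) (pair (pair x r) (pair s 0)) =
      comp (D (D f)) (pair (pair x s) (pair r 0))

variable {k}

namespace CDC

/-- The `n`-th derivative `f⁽ⁿ⁾ = (D₁)ⁿ f : A × Aⁿ → B`. -/
def fDeriv (C : CDC k) {A B : C.Obj} (f : C.Hom A B) :
    (n : ℕ) → C.Hom (C.toCDCData.dom A n) B
  | 0 => f
  | n + 1 =>
      C.comp (C.D (fDeriv C f n)) (C.pair C.fst (C.toCDCData.zpad n C.snd))

/-- The iterated differential `Dⁿ f : A^(2ⁿ) → B`. -/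
def iterD (C : CDC k) {A B : C.Obj} (f : C.Hom A B) :
    (n : ℕ) → C.Hom (C.toCDCData.twoPow A n) B
  | 0 => f
  | n + 1 => C.D (iterD C f n)

/-- `f^{(I)}` for `I ⊆ [n]` (Definition 13). -/
def fIdx (C : CDC k) {A B : C.Obj} (f : C.Hom A B) (n : ℕ) (I : Finset (Fin n)) :
    C.Hom (C.toCDCData.dom A n) B :=
  C.comp (fDeriv C f I.card)
    (C.toCDCData.tupleD I.card
      (Fin.cases (C.toCDCData.projD n 0)
        fun j => C.toCDCData.projD n (Fin.succ ((I.orderIsoOfFin rfl j : Fin n)))))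

end CDC

/-!
It suffices to treat the generic point `y = (π₀, …, πₙ)`, where `f⁽ⁿ⁾ = Dⁿ f ∘ c` by induction.
The map `c` is tupled from projections and zeros, hence linear: `D c = c ∘ snd`. As
`f⁽ⁿ⁺¹⁾ = D f⁽ⁿ⁾ ∘ ⟨fst, (π_{n+1}, 0, …, 0)⟩`, the chain rule gives
`f⁽ⁿ⁺¹⁾ = D (Dⁿ f) ∘ ⟨c ∘ fst, c ∘ (π_{n+1}, 0, …, 0)⟩`, and the two halves of this pair are the
coordinates of the next `c` indexed by the subsets not containing, resp. containing, `n + 1`.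
-/

theorem CDCData.bset_snoc_false {n : ℕ} (b : Fin n → Bool) :
    CDCData.bset (Fin.snoc b false) = (CDCData.bset b).map Fin.castSuccEmb := by
  ext i
  induction i using Fin.lastCases <;> simp [CDCData.bset, Fin.castSucc_ne_last]

theorem CDCData.bset_snoc_true {n : ℕ} (b : Fin n → Bool) :
    CDCData.bset (Fin.snoc b true) =
      insert (Fin.last n) ((CDCData.bset b).map Fin.castSuccEmb) := by
  ext i
  induction i using Fin.lastCases <;> simp [CDCData.bset, Fin.castSucc_ne_last]

/-- The family `y°` of the statement, with subsets of `Fin n` encoded by their characteristic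
functions. -/
def circFamily {M : Type*} [Zero M] {n : ℕ} (y : Fin (n + 1) → M) (b : Fin n → Bool) : M :=
  if CDCData.bset b = ∅ then y 0
  else if h : (CDCData.bset b).card = 1 then
    y (Fin.succ (((CDCData.bset b).orderIsoOfFin h 0 : Fin n)))
  else 0

section circFamily

variable {M N : Type*} [Zero M] [Zero N] {n : ℕ}

theorem circFamily_of_bset_eq_empty (y : Fin (n + 1) → M) {b : Fin n → Bool}
    (hb : CDCData.bset b = ∅) : circFamily y b = y 0 :=
  if_pos hb

theorem circFamily_of_bset_eq_singleton (y : Fin (n + 1) → M) {b : Fin n → Bool} {j : Fin n}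
    (hb : CDCData.bset b = {j}) : circFamily y b = y j.succ := by
  have hcard : (CDCData.bset b).card = 1 := by rw [hb, card_singleton]
  have hj : ((CDCData.bset b).orderIsoOfFin hcard 0 : Fin n) = j :=
    mem_singleton.mp (hb ▸ ((CDCData.bset b).orderIsoOfFin hcard 0).2)
  rw [circFamily, if_neg (by simp [hb]), dif_pos hcard, hj]

theorem circFamily_of_one_lt_card (y : Fin (n + 1) → M) {b : Fin n → Bool}
    (hb : 1 < (CDCData.bset b).card) : circFamily y b = 0 := by
  rw [circFamily, if_neg (by rintro h; simp [h] at hb), dif_neg hb.ne']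

theorem circFamily_map (φ : M → N) (hφ : φ 0 = 0) (y : Fin (n + 1) → M) (b : Fin n → Bool) :
    φ (circFamily y b) = circFamily (fun i => φ (y i)) b := by
  unfold circFamily
  split_ifs
  exacts [rfl, rfl, hφ]

theorem circFamily_snoc_false (y : Fin (n + 2) → M) (b : Fin n → Bool) :
    circFamily y (Fin.snoc b false) = circFamily (fun i => y i.castSucc) b := by
  rcases (CDCData.bset b).eq_empty_or_nonempty with hb | hb
  · rw [circFamily_of_bset_eq_empty _ hb, circFamily_of_bset_eq_empty, Fin.castSucc_zero]
    simp [CDCData.bset_snoc_false, hb]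
  obtain ⟨j, hj⟩ | hb := hb.exists_eq_singleton_or_nontrivial
  · rw [circFamily_of_bset_eq_singleton _ hj, circFamily_of_bset_eq_singleton (j := j.castSucc),
      Fin.succ_castSucc]
    simp [CDCData.bset_snoc_false, hj]
  · rw [← one_lt_card_iff_nontrivial] at hb
    rw [circFamily_of_one_lt_card _ hb, circFamily_of_one_lt_card]
    rwa [CDCData.bset_snoc_false, card_map]

theorem circFamily_snoc_true (y : Fin (n + 2) → M) (b : Fin n → Bool) :
    circFamily y (Fin.snoc b true) = if CDCData.bset b = ∅ then y (Fin.last (n + 1)) else 0 := by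
  split_ifs with hb
  · rw [circFamily_of_bset_eq_singleton (j := Fin.last n), Fin.succ_last]
    simp [CDCData.bset_snoc_true, hb]
  · refine circFamily_of_one_lt_card _ ?_
    rw [CDCData.bset_snoc_true, card_insert_of_notMem (by simp [Fin.castSucc_ne_last]), card_map]
    simpa [Nat.pos_iff_ne_zero] using hb

theorem circFamily_eq_ite (y : Fin (n + 1) → M) (hy : ∀ j : Fin n, y j.succ = 0)
    (b : Fin n → Bool) :
    circFamily y b = if CDCData.bset b = ∅ then y 0 else 0 := by
  unfold circFamily
  split_ifs
  exacts [rfl, hy _, rfl]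

end circFamily

namespace CDC

variable {k : Type u} [CommSemiring k] (C : CDC k)

theorem pair_comp {Z Z' A B : C.Obj} (f : C.Hom Z A) (g : C.Hom Z B) (h : C.Hom Z' Z) :
    C.comp (C.pair f g) h = C.pair (C.comp f h) (C.comp g h) := by
  rw [← C.pair_unique (C.comp (C.pair f g) h), ← C.comp_assoc, ← C.comp_assoc,
    C.fst_pair, C.snd_pair]

theorem cube_comp {Z Z' A : C.Obj} (n : ℕ) (x : (Fin n → Bool) → C.Hom Z A) (h : C.Hom Z' Z) :
    C.comp (C.cube n x) h = C.cube n fun b => C.comp (x b) h := by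
  induction n with
  | zero => rfl
  | succ n ih => exact (C.pair_comp _ _ h).trans (by rw [ih, ih]; rfl)

theorem projD_castSucc {A : C.Obj} (n : ℕ) (j : Fin (n + 1)) :
    C.projD (A := A) (n + 1) j.castSucc = C.comp (C.projD n j) C.fst := by
  simp only [CDCData.projD]
  exact Fin.lastCases_castSucc _

theorem projD_last {A : C.Obj} (n : ℕ) :
    C.projD (A := A) (n + 1) (Fin.last (n + 1)) = C.snd := by
  simp only [CDCData.projD]
  exact Fin.lastCases_last

theorem projD_comp_tupleD {Z A : C.Obj} (n : ℕ) (x : Fin (n + 1) → C.Hom Z A)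
    (i : Fin (n + 1)) :
    C.comp (C.projD n i) (C.tupleD n x) = x i := by
  induction n with
  | zero => rw [Fin.fin_one_eq_zero i]; exact C.id_comp (x 0)
  | succ n ih =>
    induction i using Fin.lastCases with
    | last => rw [projD_last]; exact C.snd_pair _ _
    | cast j =>
      rw [projD_castSucc]
      exact (C.comp_assoc _ _ _).trans
        ((congrArg (C.comp (C.projD n j)) (C.fst_pair _ _)).trans (ih _ _))

theorem projD_zero_comp_zpad {Z A : C.Obj} (n : ℕ) (v : C.Hom Z A) :
    C.comp (C.projD n 0) (C.zpad n v) = v := by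
  induction n with
  | zero => exact C.id_comp v
  | succ n ih =>
    rw [← Fin.castSucc_zero, projD_castSucc]
    exact (C.comp_assoc _ _ _).trans
      ((congrArg (C.comp (C.projD n 0)) (C.fst_pair _ _)).trans ih)

theorem projD_succ_comp_zpad {Z A : C.Obj} (n : ℕ) (v : C.Hom Z A) (j : Fin n) :
    C.comp (C.projD n j.succ) (C.zpad n v) = 0 := by
  induction n with
  | zero => exact j.elim0
  | succ n ih =>
    induction j using Fin.lastCases with
    | last => rw [Fin.succ_last, projD_last]; exact C.snd_pair _ _
    | cast j =>
      rw [Fin.succ_castSucc, projD_castSucc]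
      exact (C.comp_assoc _ _ _).trans
        ((congrArg (C.comp (C.projD n j.succ)) (C.fst_pair _ _)).trans (ih _))

theorem D_zero {A B : C.Obj} : C.D (0 : C.Hom A B) = 0 := by
  simpa using C.D_smul (0 : k) (0 : C.Hom A B)

theorem D_fst_comp {Z A B : C.Obj} (h : C.Hom Z (C.prod A B)) :
    C.D (C.comp C.fst h) = C.comp C.fst (C.D h) := by
  rw [C.D_comp, C.D_fst, C.comp_assoc, C.snd_pair]

theorem D_snd_comp {Z A B : C.Obj} (h : C.Hom Z (C.prod A B)) :
    C.D (C.comp C.snd h) = C.comp C.snd (C.D h) := by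
  rw [C.D_comp, C.D_snd, C.comp_assoc, C.snd_pair]

def IsDLinear {A B : C.Obj} (h : C.Hom A B) : Prop :=
  C.D h = C.comp h C.snd

variable {C}

theorem isDLinear_zero {A B : C.Obj} : C.IsDLinear (0 : C.Hom A B) := by
  rw [IsDLinear, D_zero, C.zero_comp]

theorem isDLinear_id (A : C.Obj) : C.IsDLinear (C.id A) :=
  C.D_id.trans (C.id_comp _).symm

theorem isDLinear_fst {A B : C.Obj} : C.IsDLinear (C.fst (A := A) (B := B)) :=
  C.D_fst

theorem isDLinear_snd {A B : C.Obj} : C.IsDLinear (C.snd (A := A) (B := B)) :=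
  C.D_snd

theorem IsDLinear.comp {A B B' : C.Obj} {g : C.Hom B B'} {h : C.Hom A B} (hg : C.IsDLinear g)
    (hh : C.IsDLinear h) : C.IsDLinear (C.comp g h) := by
  rw [IsDLinear, C.D_comp, hg, hh, C.comp_assoc, C.snd_pair, C.comp_assoc]

theorem IsDLinear.pair {Z A B : C.Obj} {f : C.Hom Z A} {g : C.Hom Z B} (hf : C.IsDLinear f)
    (hg : C.IsDLinear g) : C.IsDLinear (C.pair f g) := by
  rw [IsDLinear, ← C.pair_unique (C.D (C.pair f g)), ← C.D_fst_comp, ← C.D_snd_comp,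
    C.fst_pair, C.snd_pair, hf, hg, pair_comp]

theorem isDLinear_cube {Z A : C.Obj} (n : ℕ) {x : (Fin n → Bool) → C.Hom Z A}
    (hx : ∀ b, C.IsDLinear (x b)) : C.IsDLinear (C.cube n x) := by
  induction n with
  | zero => exact hx _
  | succ n ih => exact (ih fun b => hx _).pair (ih fun b => hx _)

theorem isDLinear_projD {A : C.Obj} (n : ℕ) (i : Fin (n + 1)) :
    C.IsDLinear (C.projD (A := A) n i) := by
  induction n with
  | zero => exact isDLinear_id A
  | succ n ih =>
    induction i using Fin.lastCases with
    | last => rw [projD_last]; exact isDLinear_snd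
    | cast j => rw [projD_castSucc]; exact (ih j).comp isDLinear_fst

theorem isDLinear_circFamily_projD {A : C.Obj} (n : ℕ) (b : Fin n → Bool) :
    C.IsDLinear (circFamily (C.projD (A := A) n) b) := by
  unfold circFamily
  split_ifs
  exacts [isDLinear_projD n _, isDLinear_projD n _, isDLinear_zero]

theorem cube_circFamily_projD_succ {A : C.Obj} (n : ℕ) :
    C.cube (n + 1) (circFamily (C.projD (A := A) (n + 1))) =
      C.pair (C.comp (C.cube n (circFamily (C.projD n))) C.fst)
        (C.comp (C.cube n (circFamily (C.projD n))) (C.zpad n C.snd)) := by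
  rw [cube_comp, cube_comp]
  refine congrArg₂ C.pair (congrArg (C.cube n) (funext fun b => ?_))
    (congrArg (C.cube n) (funext fun b => ?_))
  · rw [circFamily_snoc_false, circFamily_map (C.comp · C.fst) (C.zero_comp _)]
    simp only [projD_castSucc]
    rfl
  · rw [circFamily_snoc_true, circFamily_map (C.comp · (C.zpad n C.snd)) (C.zero_comp _),
      circFamily_eq_ite _ (C.projD_succ_comp_zpad n _), projD_zero_comp_zpad, projD_last]
    rfl

theorem fDeriv_eq_iterD_comp_cube {A B : C.Obj} (f : C.Hom A B) (n : ℕ) :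
    C.fDeriv f n = C.comp (C.iterD f n) (C.cube n (circFamily (C.projD n))) := by
  induction n with
  | zero =>
    show f = C.comp f (circFamily (C.projD 0) _)
    rw [circFamily_of_bset_eq_empty _ (Subsingleton.elim _ _)]
    exact (C.comp_id f).symm
  | succ n ih =>
    show C.comp (C.D (C.fDeriv f n)) (C.pair C.fst (C.zpad n C.snd)) =
      C.comp (C.D (C.iterD f n)) (C.cube (n + 1) (circFamily (C.projD (n + 1))))
    rw [ih, C.D_comp, isDLinear_cube n (isDLinear_circFamily_projD n), C.comp_assoc,
      pair_comp, C.comp_assoc, C.fst_pair, C.comp_assoc, C.snd_pair, cube_circFamily_projD_succ]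
    rfl

end CDC

theorem statement3 {k : Type u} [CommSemiring k] (C : CDC k)
    {A B : C.Obj} (f : C.Hom A B) (n : ℕ) (X : C.Obj)
    (y : Fin (n + 1) → C.Hom X A) :
    C.comp (C.fDeriv f n) (C.toCDCData.tupleD n y) =
      C.comp (C.iterD f n)
        (C.toCDCData.cube n (fun b =>
          if (CDCData.bset b) = ∅ then y 0
          else if h : (CDCData.bset b).card = 1 then
            y (Fin.succ (((CDCData.bset b).orderIsoOfFin h 0 : Fin n)))
          else 0)) := by
  rw [C.fDeriv_eq_iterD_comp_cube, C.comp_assoc, C.cube_comp]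
  congr 2
  funext b
  rw [circFamily_map (C.comp · (C.tupleD n y)) (C.zero_comp _)]
  simp only [C.projD_comp_tupleD]
  rfl
end

section
/- Given a cartesian left-k-linear category 𝒜, the Faà di Bruno category Faà(𝒜) — with the same objects as 𝒜, morphisms A ⇝ B being ℕ-indexed families f^{(n)} : A × Aⁿ → B each symmetric and k-linear in its last n variables, identities given by (id)^{(0)} = id, (id)^{(1)} = π₁, (id)^{(n)} = 0 for n ≥ 2, and composition given by the Faà di Bruno formula — is a category. -/
universe u

open Finset

variable (k : Type u) [CommSemiring k]

variable {k}

variable (k)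

variable {k}

variable (k)

/-- A cartesian left-`k`-linear category. -/
structure CLC extends CDCData k where
  id_comp : ∀ {A B} (f : Hom A B), comp (id B) f = f
  comp_id : ∀ {A B} (f : Hom A B), comp f (id A) = f
  comp_assoc : ∀ {A B C D} (h : Hom C D) (g : Hom B C) (f : Hom A B),
    comp (comp h g) f = comp h (comp g f)
  add_comp : ∀ {A B C} (g h : Hom B C) (f : Hom A B),
    comp (g + h) f = comp g f + comp h f
  smul_comp : ∀ {A B C} (r : k) (g : Hom B C) (f : Hom A B),
    comp (r • g) f = r • comp g f
  zero_comp : ∀ {A B C} (f : Hom A B), comp (0 : Hom B C) f = (0 : Hom A C)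
  toTerm_unique : ∀ {A} (f : Hom A term), f = toTerm A
  fst_pair : ∀ {Z A B} (f : Hom Z A) (g : Hom Z B), comp fst (pair f g) = f
  snd_pair : ∀ {Z A B} (f : Hom Z A) (g : Hom Z B), comp snd (pair f g) = g
  pair_unique : ∀ {Z A B} (h : Hom Z (prod A B)), pair (comp fst h) (comp snd h) = h
  fst_comp_add : ∀ {Z A B} (x y : Hom Z (prod A B)),
    comp fst (x + y) = comp fst x + comp fst y
  fst_comp_smul : ∀ {Z A B} (r : k) (x : Hom Z (prod A B)),
    comp fst (r • x) = r • comp fst x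
  snd_comp_add : ∀ {Z A B} (x y : Hom Z (prod A B)),
    comp snd (x + y) = comp snd x + comp snd y
  snd_comp_smul : ∀ {Z A B} (r : k) (x : Hom Z (prod A B)),
    comp snd (r • x) = r • comp snd x

variable {k}

/-- The underlying data of a morphism `A ⇝ B` of the Faà di Bruno category: an
`ℕ`-indexed family of maps `f⁽ⁿ⁾ : A × Aⁿ → B`. -/
abbrev FaaHom (C : CLC k) (A B : C.Obj) : Type u :=
  ∀ n : ℕ, C.Hom (C.toCDCData.dom A n) B

/-- The condition that the family `f⁽ⁿ⁾` is symmetric and `k`-linear in its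
last `n` variables, expressed via generalized elements. -/
def IsFaa (C : CLC k) {A B : C.Obj} (f : FaaHom C A B) : Prop :=
  (∀ (n : ℕ) (Z : C.Obj) (x : Fin (n + 1) → C.Hom Z A) (σ : Equiv.Perm (Fin n)),
      C.comp (f n)
          (C.toCDCData.tupleD n
            (fun i => Fin.cases (x 0) (fun j => x ((σ j).succ)) i)) =
        C.comp (f n) (C.toCDCData.tupleD n x)) ∧
  (∀ (n : ℕ) (Z : C.Obj) (x : Fin (n + 1) → C.Hom Z A) (i : Fin n)
      (u v : C.Hom Z A),
      C.comp (f n) (C.toCDCData.tupleD n (Function.update x i.succ (u + v))) =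
        C.comp (f n) (C.toCDCData.tupleD n (Function.update x i.succ u)) +
          C.comp (f n) (C.toCDCData.tupleD n (Function.update x i.succ v))) ∧
  (∀ (n : ℕ) (Z : C.Obj) (x : Fin (n + 1) → C.Hom Z A) (i : Fin n) (r : k)
      (u : C.Hom Z A),
      C.comp (f n) (C.toCDCData.tupleD n (Function.update x i.succ (r • u))) =
        r • C.comp (f n) (C.toCDCData.tupleD n (Function.update x i.succ u)))

/-- `f^{(I)}` for a Faà di Bruno family. -/
def fIdxF (C : CLC k) {A B : C.Obj} (f : FaaHom C A B) (n : ℕ)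
    (I : Finset (Fin n)) : C.Hom (C.toCDCData.dom A n) B :=
  C.comp (f I.card)
    (C.toCDCData.tupleD I.card
      (Fin.cases (C.toCDCData.projD n 0)
        fun j => C.toCDCData.projD n (Fin.succ ((I.orderIsoOfFin rfl j : Fin n)))))

/-- Faà di Bruno composition (the higher-order chain rule). -/
noncomputable def faaComp (C : CLC k) {A B Cb : C.Obj} (g : FaaHom C B Cb) (f : FaaHom C A B) :
    FaaHom C A Cb := fun n =>
  ∑ P ∈ partitions n,
    C.comp (g P.toList.length)
      (C.toCDCData.tupleD P.toList.length
        (Fin.cases (fIdxF C f n ∅) fun j => fIdxF C f n (P.toList.get j)))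

/-- The Faà di Bruno identity: `(id)⁽⁰⁾ = id`, `(id)⁽¹⁾ = π₁`, `(id)⁽ⁿ⁾ = 0`
for `n ≥ 2`. -/
def idF (C : CLC k) (A : C.Obj) : FaaHom C A A := fun n =>
  match n with
  | 0 => C.id A
  | 1 => C.snd
  | _ + 2 => 0


/-!
All identities are checked on generalized elements `x₀, v₁, …, vₘ`, where composing with
`f^{(I)}` only sees the arguments indexed by `I`. Since the families are symmetric, a family
applied to arguments indexed by a finite set does not depend on how that set is enumerated. Hence
the Faà di Bruno formula for `(g ∘ f)⁽ⁿ⁾` makes sense for any finite index set `S` in place of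
`[n]`, and reindexing `S` along an injection just transports the partitions of `S`.

Symmetry of `g ∘ f` is such a reindexing along a permutation. Linearity in an argument `a` holds
term by term, because `a` lies in exactly one block of each partition. For the unit laws only
the partition `{S}`, respectively the partition of `S` into singletons, contributes. Associativity
is the bijection between pairs (a partition `R` of `S`, a partition of each block of `R`) and
pairs (a partition `P` of `S`, a partition of the set `P`): `P` collects all the small blocks and
`R` consists of the unions of the groups.
-/

open Function

namespace Finset

variable {α : Type*} (s : Finset α)

lemma toList_get_mem (j : Fin s.toList.length) : s.toList.get j ∈ s :=
  s.mem_toList.mp (List.get_mem _ _)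

lemma toList_get_injective : Function.Injective s.toList.get :=
  List.nodup_iff_injective_get.mp s.nodup_toList

variable {s} in
lemma exists_toList_get_eq {a : α} (h : a ∈ s) : ∃ j, s.toList.get j = a :=
  List.mem_iff_get.mp (s.mem_toList.mpr h)

lemma range_toList_get : Set.range s.toList.get = s := by
  ext a
  exact ⟨fun ⟨j, hj⟩ => hj ▸ s.toList_get_mem j, exists_toList_get_eq⟩

lemma image_toList_get_univ [DecidableEq α] : univ.image s.toList.get = s := by
  ext a
  simp only [mem_image, mem_univ, true_and]
  exact ⟨fun ⟨j, hj⟩ => hj ▸ s.toList_get_mem j, exists_toList_get_eq⟩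

end Finset

section Partition

variable {ι κ : Type*}

structure IsPartitionOf (P : Finset (Finset ι)) (S : Finset ι) : Prop where
  empty_notMem : ∅ ∉ P
  subset : ∀ T ∈ P, T ⊆ S
  exists_mem : ∀ a ∈ S, ∃ T ∈ P, a ∈ T
  eq_of_mem : ∀ {a T₁ T₂}, T₁ ∈ P → T₂ ∈ P → a ∈ T₁ → a ∈ T₂ → T₁ = T₂

open Classical in
noncomputable def partitionsOf (S : Finset ι) : Finset (Finset (Finset ι)) :=
  S.powerset.powerset.filter (IsPartitionOf · S)

lemma mem_partitionsOf {S : Finset ι} {P : Finset (Finset ι)} :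
    P ∈ partitionsOf S ↔ IsPartitionOf P S := by
  classical
  simp only [partitionsOf, mem_filter, mem_powerset, and_iff_right_iff_imp]
  exact fun hP T hT => mem_powerset.mpr (hP.subset T hT)

namespace IsPartitionOf

variable {S : Finset ι} {P : Finset (Finset ι)}

lemma nonempty_of_mem (hP : IsPartitionOf P S) {T : Finset ι} (hT : T ∈ P) : T.Nonempty :=
  nonempty_iff_ne_empty.mpr fun h => hP.empty_notMem (h ▸ hT)

lemma biUnion_id [DecidableEq ι] (hP : IsPartitionOf P S) : P.biUnion id = S := by
  ext a
  simp only [mem_biUnion, id]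
  exact ⟨fun ⟨T, hT, ha⟩ => hP.subset T hT ha, hP.exists_mem a⟩

lemma image [DecidableEq ι] [DecidableEq κ] (hP : IsPartitionOf P S) {e : ι → κ}
    (he : Injective e) : IsPartitionOf (P.image (Finset.image e)) (S.image e) where
  empty_notMem h := by
    obtain ⟨T, hT, hTe⟩ := mem_image.mp h
    exact hP.empty_notMem (image_eq_empty.mp hTe ▸ hT)
  subset _ hT := by
    obtain ⟨T, hTP, rfl⟩ := mem_image.mp hT
    exact image_subset_image (hP.subset T hTP)
  exists_mem b hb := by
    obtain ⟨a, ha, rfl⟩ := mem_image.mp hb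
    obtain ⟨T, hT, haT⟩ := hP.exists_mem a ha
    exact ⟨T.image e, mem_image_of_mem _ hT, mem_image_of_mem _ haT⟩
  eq_of_mem h₁ h₂ hb₁ hb₂ := by
    obtain ⟨T₁, hT₁, rfl⟩ := mem_image.mp h₁
    obtain ⟨T₂, hT₂, rfl⟩ := mem_image.mp h₂
    obtain ⟨a, ha₁, rfl⟩ := mem_image.mp hb₁
    obtain ⟨a', ha₂, hea⟩ := mem_image.mp hb₂
    rw [hP.eq_of_mem hT₁ hT₂ ha₁ (he hea ▸ ha₂)]

end IsPartitionOf

lemma partitions_eq_partitionsOf_univ (n : ℕ) :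
    partitions n = partitionsOf (univ : Finset (Fin n)) := by
  ext P
  simp only [partitions, mem_filter, mem_univ, true_and, mem_partitionsOf,
    card_eq_one, eq_singleton_iff_unique_mem]
  constructor
  · rintro ⟨h0, h1⟩
    refine ⟨h0, fun _ _ => subset_univ _, fun a _ => ?_, fun {a T₁ T₂} h₁ h₂ ha₁ ha₂ => ?_⟩
    · obtain ⟨T, hT, -⟩ := h1 a
      exact ⟨T, hT⟩
    · obtain ⟨T, -, hT⟩ := h1 a
      rw [hT T₁ ⟨h₁, ha₁⟩, hT T₂ ⟨h₂, ha₂⟩]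
  · intro hP
    refine ⟨hP.empty_notMem, fun a => ?_⟩
    obtain ⟨T, hT, haT⟩ := hP.exists_mem a (mem_univ a)
    exact ⟨T, ⟨hT, haT⟩, fun T' hT' => hP.eq_of_mem hT'.1 hT hT'.2 haT⟩

lemma partitionsOf_empty : partitionsOf (∅ : Finset ι) = {∅} := by
  ext P
  rw [mem_partitionsOf, mem_singleton]
  constructor
  · intro hP
    refine eq_empty_of_forall_notMem fun T hT => ?_
    obtain ⟨a, ha⟩ := hP.nonempty_of_mem hT
    exact notMem_empty a (hP.subset T hT ha)
  · rintro rfl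
    exact ⟨notMem_empty _, by simp, by simp, by simp⟩

lemma isPartitionOf_singleton {S : Finset ι} (hS : S.Nonempty) : IsPartitionOf {S} S where
  empty_notMem h := hS.ne_empty (mem_singleton.mp h).symm
  subset _ hT := (mem_singleton.mp hT).le
  exists_mem _ ha := ⟨S, mem_singleton_self S, ha⟩
  eq_of_mem h₁ h₂ _ _ := (mem_singleton.mp h₁).trans (mem_singleton.mp h₂).symm

lemma IsPartitionOf.two_le_card [DecidableEq ι] {S : Finset ι} {P : Finset (Finset ι)}
    (hP : IsPartitionOf P S) (hS : S.Nonempty) (hne : P ≠ {S}) : 2 ≤ P.card := by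
  by_contra! h
  obtain ⟨a, ha⟩ := hS
  obtain ⟨T, hT, -⟩ := hP.exists_mem a ha
  obtain ⟨T', rfl⟩ := card_eq_one.mp
    (le_antisymm (Nat.lt_succ_iff.mp h) (card_pos.mpr ⟨T, hT⟩))
  exact hne (by rw [← hP.biUnion_id, singleton_biUnion, id])

lemma isPartitionOf_image_singleton [DecidableEq ι] (S : Finset ι) :
    IsPartitionOf (S.image singleton) S where
  empty_notMem h := by
    obtain ⟨a, -, ha⟩ := mem_image.mp h
    exact singleton_ne_empty a ha
  subset T hT := by
    obtain ⟨a, ha, rfl⟩ := mem_image.mp hT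
    exact singleton_subset_iff.mpr ha
  exists_mem a ha := ⟨{a}, mem_image_of_mem _ ha, mem_singleton_self a⟩
  eq_of_mem h₁ h₂ ha₁ ha₂ := by
    obtain ⟨b₁, -, rfl⟩ := mem_image.mp h₁
    obtain ⟨b₂, -, rfl⟩ := mem_image.mp h₂
    rw [← mem_singleton.mp ha₁, ← mem_singleton.mp ha₂]

lemma IsPartitionOf.exists_two_le_card [DecidableEq ι] {S : Finset ι} {P : Finset (Finset ι)}
    (hP : IsPartitionOf P S) (hne : P ≠ S.image singleton) : ∃ T ∈ P, 2 ≤ T.card := by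
  by_contra! h
  have hcard : ∀ T ∈ P, T.card = 1 := fun T hT =>
    le_antisymm (Nat.lt_succ_iff.mp (h T hT)) (hP.nonempty_of_mem hT).card_pos
  refine hne (ext fun T => ⟨fun hT => ?_, fun hT => ?_⟩)
  · obtain ⟨a, rfl⟩ := card_eq_one.mp (hcard T hT)
    exact mem_image_of_mem _ (hP.subset _ hT (mem_singleton_self a))
  · obtain ⟨a, ha, rfl⟩ := mem_image.mp hT
    obtain ⟨T, hT, haT⟩ := hP.exists_mem a ha
    obtain ⟨b, rfl⟩ := card_eq_one.mp (hcard T hT)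
    rwa [mem_singleton.mp haT]

end Partition

section Transport

variable {ι κ : Type*} [DecidableEq ι] [DecidableEq κ] {e : ι → κ}

lemma IsPartitionOf.comap {S : Finset ι} {Q : Finset (Finset κ)}
    (hQ : IsPartitionOf Q (S.image e)) : IsPartitionOf (Q.image fun T => S.filter (e · ∈ T)) S where
  empty_notMem h := by
    obtain ⟨T, hT, hTe⟩ := mem_image.mp h
    obtain ⟨b, hb⟩ := hQ.nonempty_of_mem hT
    obtain ⟨a, ha, rfl⟩ := mem_image.mp (hQ.subset T hT hb)
    exact notMem_empty a (hTe ▸ mem_filter.mpr ⟨ha, hb⟩)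
  subset _ hT := by
    obtain ⟨T, -, rfl⟩ := mem_image.mp hT
    exact filter_subset _ _
  exists_mem a ha := by
    obtain ⟨T, hT, haT⟩ := hQ.exists_mem (e a) (mem_image_of_mem e ha)
    exact ⟨_, mem_image_of_mem _ hT, mem_filter.mpr ⟨ha, haT⟩⟩
  eq_of_mem h₁ h₂ ha₁ ha₂ := by
    obtain ⟨T₁, hT₁, rfl⟩ := mem_image.mp h₁
    obtain ⟨T₂, hT₂, rfl⟩ := mem_image.mp h₂
    rw [hQ.eq_of_mem hT₁ hT₂ (mem_filter.mp ha₁).2 (mem_filter.mp ha₂).2]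

lemma sum_partitionsOf_image {M : Type*} [AddCommMonoid M] (he : Injective e) (S : Finset ι)
    (F : Finset (Finset κ) → M) :
    ∑ P ∈ partitionsOf S, F (P.image (image e)) = ∑ Q ∈ partitionsOf (S.image e), F Q := by
  refine sum_nbij' (image (image e))
    (image fun T => S.filter (e · ∈ T)) (fun P hP => ?_) (fun Q hQ => ?_)
    (fun P hP => ?_) (fun Q hQ => ?_) (fun _ _ => rfl)
  · exact mem_partitionsOf.mpr ((mem_partitionsOf.mp hP).image he)
  · exact mem_partitionsOf.mpr (mem_partitionsOf.mp hQ).comap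
  · rw [image_image]
    refine (image_congr fun T hT => ?_).trans image_id
    ext a
    simp only [comp_apply, id, mem_filter, he.mem_finset_image]
    exact ⟨And.right, fun ha => ⟨(mem_partitionsOf.mp hP).subset T hT ha, ha⟩⟩
  · rw [image_image]
    refine (image_congr fun T hT => ?_).trans image_id
    ext b
    simp only [comp_apply, id, mem_image, mem_filter]
    constructor
    · rintro ⟨a, ⟨-, ha⟩, rfl⟩
      exact ha
    · intro hb
      obtain ⟨a, ha, rfl⟩ := mem_image.mp ((mem_partitionsOf.mp hQ).subset T hT hb)
      exact ⟨a, ⟨ha, hb⟩, rfl⟩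

end Transport

section Refinement

variable {ι : Type*} {S : Finset ι} {R : Finset (Finset ι)}
  {c : Fin R.toList.length → Finset (Finset ι)}

lemma IsPartitionOf.index_eq_of_mem (hR : IsPartitionOf R S)
    (hc : ∀ j, IsPartitionOf (c j) (R.toList.get j)) {a : ι} {j₁ j₂ : Fin R.toList.length}
    {T₁ T₂ : Finset ι} (h₁ : T₁ ∈ c j₁) (h₂ : T₂ ∈ c j₂) (ha₁ : a ∈ T₁) (ha₂ : a ∈ T₂) :
    j₁ = j₂ :=
  R.toList_get_injective (hR.eq_of_mem (R.toList_get_mem j₁) (R.toList_get_mem j₂)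
    ((hc j₁).subset T₁ h₁ ha₁) ((hc j₂).subset T₂ h₂ ha₂))

variable [DecidableEq ι]

namespace IsPartitionOf

variable {P G : Finset (Finset ι)}

lemma filter_subset_biUnion (hP : IsPartitionOf P S) (hG : G ⊆ P) :
    P.filter (· ⊆ G.biUnion id) = G := by
  ext T
  rw [mem_filter]
  refine ⟨fun ⟨hT, hsub⟩ => ?_, fun hT => ⟨hG hT, subset_biUnion_of_mem id hT⟩⟩
  obtain ⟨a, ha⟩ := hP.nonempty_of_mem hT
  obtain ⟨T', hT', haT'⟩ := mem_biUnion.mp (hsub ha)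
  rwa [hP.eq_of_mem hT (hG hT') ha haT']

lemma of_subset (hP : IsPartitionOf P S) (hG : G ⊆ P) : IsPartitionOf G (G.biUnion id) where
  empty_notMem h := hP.empty_notMem (hG h)
  subset _ hT := subset_biUnion_of_mem id hT
  exists_mem _ ha := mem_biUnion.mp ha
  eq_of_mem h₁ h₂ := hP.eq_of_mem (hG h₁) (hG h₂)

lemma image_biUnion (hP : IsPartitionOf P S) {Q : Finset (Finset (Finset ι))}
    (hQ : IsPartitionOf Q P) : IsPartitionOf (Q.image (·.biUnion id)) S where
  empty_notMem h := by
    obtain ⟨G, hG, hGe⟩ := mem_image.mp h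
    obtain ⟨T, hT⟩ := hQ.nonempty_of_mem hG
    obtain ⟨a, ha⟩ := hP.nonempty_of_mem (hQ.subset G hG hT)
    exact notMem_empty a (hGe ▸ mem_biUnion.mpr ⟨T, hT, ha⟩)
  subset _ hT := by
    obtain ⟨G, hG, rfl⟩ := mem_image.mp hT
    exact biUnion_subset.mpr fun T hT => hP.subset T (hQ.subset G hG hT)
  exists_mem a ha := by
    obtain ⟨T, hT, haT⟩ := hP.exists_mem a ha
    obtain ⟨G, hG, hTG⟩ := hQ.exists_mem T hT
    exact ⟨_, mem_image_of_mem _ hG, mem_biUnion.mpr ⟨T, hTG, haT⟩⟩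
  eq_of_mem h₁ h₂ ha₁ ha₂ := by
    obtain ⟨G₁, hG₁, rfl⟩ := mem_image.mp h₁
    obtain ⟨G₂, hG₂, rfl⟩ := mem_image.mp h₂
    obtain ⟨T₁, hT₁, haT₁⟩ := mem_biUnion.mp ha₁
    obtain ⟨T₂, hT₂, haT₂⟩ := mem_biUnion.mp ha₂
    have hT : T₁ = T₂ :=
      hP.eq_of_mem (hQ.subset G₁ hG₁ hT₁) (hQ.subset G₂ hG₂ hT₂) haT₁ haT₂
    rw [hQ.eq_of_mem hG₁ hG₂ hT₁ (hT ▸ hT₂)]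

end IsPartitionOf

lemma injective_of_isPartitionOf_toList_get
    (hc : ∀ j, IsPartitionOf (c j) (R.toList.get j)) : Injective c := fun j₁ j₂ h =>
  R.toList_get_injective (by rw [← (hc j₁).biUnion_id, ← (hc j₂).biUnion_id, h])

lemma IsPartitionOf.biUnion_toList_get (hR : IsPartitionOf R S)
    (hc : ∀ j, IsPartitionOf (c j) (R.toList.get j)) :
    IsPartitionOf (univ.biUnion c) S where
  empty_notMem h := by
    obtain ⟨j, -, hj⟩ := mem_biUnion.mp h
    exact (hc j).empty_notMem hj
  subset T hT := by
    obtain ⟨j, -, hj⟩ := mem_biUnion.mp hT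
    exact ((hc j).subset T hj).trans (hR.subset _ (R.toList_get_mem j))
  exists_mem a ha := by
    obtain ⟨B, hB, haB⟩ := hR.exists_mem a ha
    obtain ⟨j, rfl⟩ := R.exists_toList_get_eq hB
    obtain ⟨T, hT, haT⟩ := (hc j).exists_mem a haB
    exact ⟨T, mem_biUnion.mpr ⟨j, mem_univ j, hT⟩, haT⟩
  eq_of_mem {a T₁ T₂} h₁ h₂ ha₁ ha₂ := by
    obtain ⟨j₁, -, hj₁⟩ := mem_biUnion.mp h₁
    obtain ⟨j₂, -, hj₂⟩ := mem_biUnion.mp h₂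
    obtain rfl := hR.index_eq_of_mem hc hj₁ hj₂ ha₁ ha₂
    exact (hc j₁).eq_of_mem hj₁ hj₂ ha₁ ha₂

lemma IsPartitionOf.image_toList_get (hR : IsPartitionOf R S)
    (hc : ∀ j, IsPartitionOf (c j) (R.toList.get j)) :
    IsPartitionOf (univ.image c) (univ.biUnion c) where
  empty_notMem h := by
    obtain ⟨j, -, hj⟩ := mem_image.mp h
    obtain ⟨a, ha⟩ := hR.nonempty_of_mem (R.toList_get_mem j)
    obtain ⟨T, hT, -⟩ := (hc j).exists_mem a ha
    exact notMem_empty T (hj ▸ hT)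
  subset _ hG := by
    obtain ⟨j, -, rfl⟩ := mem_image.mp hG
    exact subset_biUnion_of_mem c (mem_univ j)
  exists_mem T hT := by
    obtain ⟨j, -, hj⟩ := mem_biUnion.mp hT
    exact ⟨c j, mem_image_of_mem c (mem_univ j), hj⟩
  eq_of_mem {T _ _} h₁ h₂ hT₁ hT₂ := by
    obtain ⟨j₁, -, rfl⟩ := mem_image.mp h₁
    obtain ⟨j₂, -, rfl⟩ := mem_image.mp h₂
    obtain ⟨a, ha⟩ := (hc j₁).nonempty_of_mem hT₁
    rw [hR.index_eq_of_mem hc hT₁ hT₂ ha ha]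

lemma image_biUnion_image_eq (hc : ∀ j, IsPartitionOf (c j) (R.toList.get j)) :
    (univ.image c).image (·.biUnion id) = R := by
  rw [image_image]
  exact (image_congr fun j _ => (hc j).biUnion_id).trans R.image_toList_get_univ

lemma eq_of_image_univ_eq {c₁ c₂ : Fin R.toList.length → Finset (Finset ι)}
    (hc₁ : ∀ j, IsPartitionOf (c₁ j) (R.toList.get j))
    (hc₂ : ∀ j, IsPartitionOf (c₂ j) (R.toList.get j))
    (h : univ.image c₁ = univ.image c₂) : c₁ = c₂ := by
  funext j
  obtain ⟨j', -, hj'⟩ := mem_image.mp (h ▸ mem_image_of_mem c₁ (mem_univ j))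
  obtain rfl : j' = j := R.toList_get_injective
    (by rw [← (hc₂ j').biUnion_id, ← (hc₁ j).biUnion_id, hj'])
  exact hj'.symm

lemma IsPartitionOf.exists_filter_subset_eq {P : Finset (Finset ι)} (hP : IsPartitionOf P S)
    {Q : Finset (Finset (Finset ι))} (hQ : IsPartitionOf Q P) {B : Finset ι}
    (hB : B ∈ Q.image (·.biUnion id)) : ∃ G ∈ Q, B = G.biUnion id ∧ P.filter (· ⊆ B) = G := by
  obtain ⟨G, hG, rfl⟩ := mem_image.mp hB
  exact ⟨G, hG, rfl, hP.filter_subset_biUnion (hQ.subset G hG)⟩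

lemma sum_partitionsOf_piFinset {M : Type*} [AddCommMonoid M] (S : Finset ι)
    (F : Finset (Finset (Finset ι)) → M) :
    ∑ R ∈ partitionsOf S, ∑ c ∈ Fintype.piFinset
        (fun j : Fin R.toList.length => partitionsOf (R.toList.get j)), F (univ.image c) =
      ∑ P ∈ partitionsOf S, ∑ Q ∈ partitionsOf P, F Q := by
  rw [sum_sigma', sum_sigma']
  refine sum_bij (fun x _ => ⟨univ.biUnion x.2, univ.image x.2⟩)
    ?mem ?inj ?surj (fun _ _ => rfl)
  case mem =>
    rintro ⟨R, c⟩ hx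
    simp only [mem_sigma, mem_partitionsOf, Fintype.mem_piFinset] at hx ⊢
    exact ⟨hx.1.biUnion_toList_get hx.2, hx.1.image_toList_get hx.2⟩
  case inj =>
    rintro ⟨R₁, c₁⟩ hx₁ ⟨R₂, c₂⟩ hx₂ heq
    simp only [mem_sigma, mem_partitionsOf, Fintype.mem_piFinset] at hx₁ hx₂
    have hc : univ.image c₁ = univ.image c₂ := (Sigma.mk.inj_iff.mp heq).2.eq
    obtain rfl : R₁ = R₂ := by
      rw [← image_biUnion_image_eq hx₁.2, ← image_biUnion_image_eq hx₂.2, hc]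
    rw [eq_of_image_univ_eq hx₁.2 hx₂.2 hc]
  case surj =>
    rintro ⟨P, Q⟩ hy
    simp only [mem_sigma, mem_partitionsOf] at hy
    obtain ⟨hP, hQ⟩ := hy
    set R := Q.image (·.biUnion id)
    have hblock : ∀ j, ∃ G ∈ Q, R.toList.get j = G.biUnion id ∧ P.filter (· ⊆ R.toList.get j) = G :=
      fun j => hP.exists_filter_subset_eq hQ (R.toList_get_mem j)
    refine ⟨⟨R, fun j => P.filter (· ⊆ R.toList.get j)⟩, ?_, ?_⟩
    · simp only [mem_sigma, mem_partitionsOf, Fintype.mem_piFinset]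
      refine ⟨hP.image_biUnion hQ, fun j => ?_⟩
      obtain ⟨G, hG, hj, hGj⟩ := hblock j
      rw [hGj, hj]
      exact hP.of_subset (hQ.subset G hG)
    · refine Sigma.ext ?_ (heq_of_eq ?_)
      · ext T
        simp only [mem_biUnion, mem_univ, true_and, mem_filter]
        refine ⟨fun ⟨_, hT, _⟩ => hT, fun hT => ?_⟩
        obtain ⟨G, hG, hTG⟩ := hQ.exists_mem T hT
        obtain ⟨j, hj⟩ := R.exists_toList_get_eq (mem_image_of_mem (·.biUnion id) hG)
        exact ⟨j, hT, hj ▸ subset_biUnion_of_mem id hTG⟩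
      · ext G
        simp only [mem_image, mem_univ, true_and]
        constructor
        · rintro ⟨j, rfl⟩
          obtain ⟨G, hG, -, hGj⟩ := hblock j
          rwa [hGj]
        · intro hG
          obtain ⟨j, hj⟩ := R.exists_toList_get_eq (mem_image_of_mem (·.biUnion id) hG)
          exact ⟨j, by rw [hj, hP.filter_subset_biUnion (hQ.subset G hG)]⟩

end Refinement

section LinearMaps

variable {R M N P ι : Type*} [Semiring R] [AddCommMonoid M] [AddCommMonoid N] [AddCommMonoid P]
  [Module R M] [Module R N] [Module R P]

lemma IsLinearMap.comp {g : N → P} {f : M → N} (hg : IsLinearMap R g) (hf : IsLinearMap R f) :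
    IsLinearMap R (g ∘ f) :=
  ((IsLinearMap.mk' g hg).comp (IsLinearMap.mk' f hf)).isLinear

lemma IsLinearMap.finset_sum {F : ι → M → N} (s : Finset ι) (h : ∀ i ∈ s, IsLinearMap R (F i)) :
    IsLinearMap R fun w => ∑ i ∈ s, F i w := by
  convert (∑ i ∈ s.attach, IsLinearMap.mk' (F i) (h i i.2)).isLinear using 1
  funext w
  rw [LinearMap.sum_apply, ← s.sum_attach]
  rfl

end LinearMaps

variable {k : Type u} [CommSemiring k] {C : CLC k}

namespace CLC

lemma pair_comp {Z Z' A B : C.Obj} (a : C.Hom Z A) (b : C.Hom Z B) (t : C.Hom Z' Z) :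
    C.comp (C.pair a b) t = C.pair (C.comp a t) (C.comp b t) := by
  conv_lhs => rw [← C.pair_unique (C.comp (C.pair a b) t)]
  rw [← C.comp_assoc, ← C.comp_assoc, C.fst_pair, C.snd_pair]

lemma tupleD_comp {Z Z' A : C.Obj} (n : ℕ) (x : Fin (n + 1) → C.Hom Z A) (t : C.Hom Z' Z) :
    C.comp (C.tupleD n x) t = C.tupleD n (fun i => C.comp (x i) t) := by
  induction n with
  | zero => rfl
  | succ n ih => exact (pair_comp _ _ _).trans (by rw [ih]; rfl)

lemma projD_comp_tupleD {Z A : C.Obj} (n : ℕ) (x : Fin (n + 1) → C.Hom Z A) (i : Fin (n + 1)) :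
    C.comp (C.projD n i) (C.tupleD n x) = x i := by
  induction n with
  | zero => rw [Fin.eq_zero i]; exact C.id_comp _
  | succ n ih =>
    cases i using Fin.lastCases with
    | last =>
      simp only [CDCData.projD]
      erw [Fin.lastCases_last]
      exact C.snd_pair _ _
    | cast i =>
      simp only [CDCData.projD, CDCData.tupleD]
      erw [Fin.lastCases_castSucc, C.comp_assoc, C.fst_pair, ih]

lemma tupleD_projD {A : C.Obj} (n : ℕ) : C.tupleD n (C.projD n) = C.id (C.dom A n) := by
  induction n with
  | zero => rfl
  | succ n ih =>
    simp only [CDCData.tupleD, CDCData.projD]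
    have hfst : (C.tupleD n fun i =>
        (Fin.lastCases C.snd (fun j => C.comp (C.projD n j) C.fst) i.castSucc :
          C.Hom (C.dom A (n + 1)) A)) = C.comp (C.tupleD n (C.projD n)) C.fst := by
      rw [tupleD_comp]
      congr 1
      funext i
      erw [Fin.lastCases_castSucc]
      rfl
    rw [hfst, ih, C.id_comp]
    have h := C.pair_unique (C.id (C.dom A (n + 1)))
    erw [C.comp_id, C.comp_id] at h
    erw [Fin.lastCases_last]
    exact h

lemma sum_comp {Z A B : C.Obj} {ι : Type*} (s : Finset ι) (F : ι → C.Hom A B) (t : C.Hom Z A) :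
    C.comp (∑ i ∈ s, F i) t = ∑ i ∈ s, C.comp (F i) t := by
  classical
  induction s using Finset.induction_on with
  | empty => simpa using C.zero_comp t
  | insert _ _ h ih => rw [sum_insert h, sum_insert h, C.add_comp, ih]

lemma cases_comp {Z Z' A : C.Obj} {m : ℕ} (x0 : C.Hom Z A) (v : Fin m → C.Hom Z A)
    (t : C.Hom Z' Z) :
    (fun i => C.comp (Fin.cases x0 v i : C.Hom Z A) t) =
      Fin.cases (C.comp x0 t) (fun j => C.comp (v j) t) := by
  funext i
  cases i using Fin.cases <;> rfl

lemma hom_ext_dom {A B : C.Obj} {n : ℕ} {h₁ h₂ : C.Hom (C.dom A n) B}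
    (h : ∀ (Z : C.Obj) (x0 : C.Hom Z A) (v : Fin n → C.Hom Z A),
      C.comp h₁ (C.tupleD n (Fin.cases x0 v)) = C.comp h₂ (C.tupleD n (Fin.cases x0 v))) :
    h₁ = h₂ := by
  have hid := h _ (C.projD n 0) (fun j => C.projD n j.succ)
  rwa [show Fin.cases (C.projD n 0) (fun j => C.projD n j.succ) = C.projD (A := A) n from
    Fin.cons_self_tail _, tupleD_projD, C.comp_id, C.comp_id] at hid

end CLC

variable {A B Z : C.Obj}

namespace FaaHom

def eval (f : FaaHom C A B) (x0 : C.Hom Z A) {m : ℕ} (v : Fin m → C.Hom Z A) : C.Hom Z B :=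
  C.comp (f m) (C.tupleD m (Fin.cases x0 v))

/-- The order in which `s.toList` enumerates `s` is arbitrary; for symmetric families it is
irrelevant by `IsFaa.eval_comp_eq_evalFinset`. -/
noncomputable def evalFinset {ι : Type*} (f : FaaHom C A B) (x0 : C.Hom Z A) (v : ι → C.Hom Z A)
    (s : Finset ι) : C.Hom Z B :=
  f.eval x0 fun j => v (s.toList.get j)

lemma evalFinset_congr (f : FaaHom C A B) (x0 : C.Hom Z A) {ι : Type*} {v v' : ι → C.Hom Z A}
    {s : Finset ι} (h : ∀ a ∈ s, v a = v' a) : f.evalFinset x0 v s = f.evalFinset x0 v' s := by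
  unfold evalFinset
  congr 1
  funext j
  exact h _ (s.toList_get_mem j)

noncomputable def faaSum {D : C.Obj} {ι : Type*} (g : FaaHom C B D) (f : FaaHom C A B)
    (x0 : C.Hom Z A) (v : ι → C.Hom Z A) (S : Finset ι) : C.Hom Z D :=
  ∑ P ∈ partitionsOf S, g.evalFinset (C.comp (f 0) x0) (f.evalFinset x0 v) P

end FaaHom

lemma isFaa_of_eval {f : FaaHom C A B}
    (hsymm : ∀ (m : ℕ) (Z : C.Obj) (x0 : C.Hom Z A) (v : Fin m → C.Hom Z A)
      (σ : Equiv.Perm (Fin m)), f.eval x0 (v ∘ σ) = f.eval x0 v)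
    (hlin : ∀ (m : ℕ) (Z : C.Obj) (x0 : C.Hom Z A) (v : Fin m → C.Hom Z A) (i : Fin m),
      IsLinearMap k fun w => f.eval x0 (update v i w)) :
    IsFaa C f := by
  refine ⟨fun m Z x σ => ?_, fun m Z x i a b => ?_, fun m Z x i r a => ?_⟩ <;>
    obtain ⟨x0, v, rfl⟩ : ∃ x0 v, x = Fin.cons x0 v :=
      ⟨x 0, Fin.tail x, (Fin.cons_self_tail x).symm⟩
  · exact hsymm m Z x0 v σ
  · simp only [← Fin.cons_update]
    exact (hlin m Z x0 v i).map_add a b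
  · simp only [← Fin.cons_update]
    exact (hlin m Z x0 v i).map_smul r a

namespace IsFaa

variable {f : FaaHom C A B}

lemma eval_comp_perm (hf : IsFaa C f) (x0 : C.Hom Z A) {m : ℕ} (v : Fin m → C.Hom Z A)
    (σ : Equiv.Perm (Fin m)) : f.eval x0 (v ∘ σ) = f.eval x0 v :=
  hf.1 m Z (Fin.cons x0 v) σ

lemma isLinearMap_eval_update (hf : IsFaa C f) (x0 : C.Hom Z A) {m : ℕ} (v : Fin m → C.Hom Z A)
    (i : Fin m) : IsLinearMap k fun w => f.eval x0 (update v i w) := by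
  constructor
  · intro a b
    have h := hf.2.1 m Z (Fin.cons x0 v) i a b
    simp only [← Fin.cons_update] at h
    exact h
  · intro r a
    have h := hf.2.2 m Z (Fin.cons x0 v) i r a
    simp only [← Fin.cons_update] at h
    exact h

def evalMultilinear (hf : IsFaa C f) (x0 : C.Hom Z A) (m : ℕ) :
    MultilinearMap k (fun _ : Fin m => C.Hom Z A) (C.Hom Z B) where
  toFun := f.eval x0
  map_update_add' v i a b := by
    convert (hf.isLinearMap_eval_update x0 v i).map_add a b
  map_update_smul' v i r a := by
    convert (hf.isLinearMap_eval_update x0 v i).map_smul r a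

lemma eval_comp_eq_eval_comp (hf : IsFaa C f) (x0 : C.Hom Z A) {ι : Type*} (v : ι → C.Hom Z A)
    {m₁ m₂ : ℕ} {e₁ : Fin m₁ → ι} {e₂ : Fin m₂ → ι} (h₁ : Injective e₁) (h₂ : Injective e₂)
    (hr : Set.range e₁ = Set.range e₂) : f.eval x0 (v ∘ e₁) = f.eval x0 (v ∘ e₂) := by
  let ε : Fin m₁ ≃ Fin m₂ := (Equiv.ofInjective e₁ h₁).trans
    ((Equiv.setCongr hr).trans (Equiv.ofInjective e₂ h₂).symm)
  have hε : e₂ ∘ ε = e₁ := funext fun j =>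
    congrArg Subtype.val ((Equiv.ofInjective e₂ h₂).apply_symm_apply ⟨e₁ j, hr ▸ ⟨j, rfl⟩⟩)
  obtain rfl : m₁ = m₂ := Fin.equiv_iff_eq.mp ⟨ε⟩
  rw [← hε, ← comp_assoc]
  exact hf.eval_comp_perm x0 _ ε

lemma eval_comp_eq_evalFinset (hf : IsFaa C f) (x0 : C.Hom Z A) {ι : Type*} (v : ι → C.Hom Z A)
    {m : ℕ} {e : Fin m → ι} (he : Injective e) {s : Finset ι} (hs : Set.range e = s) :
    f.eval x0 (v ∘ e) = f.evalFinset x0 v s :=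
  hf.eval_comp_eq_eval_comp x0 v he s.toList_get_injective (hs.trans s.range_toList_get.symm)

lemma evalFinset_comp (hf : IsFaa C f) (x0 : C.Hom Z A) {ι κ : Type*} [DecidableEq κ]
    (v : κ → C.Hom Z A) {e : ι → κ} (he : Injective e) (s : Finset ι) :
    f.evalFinset x0 (v ∘ e) s = f.evalFinset x0 v (s.image e) :=
  hf.eval_comp_eq_evalFinset x0 v (he.comp s.toList_get_injective)
    (by rw [Set.range_comp, s.range_toList_get, coe_image])

lemma evalFinset_empty (hf : IsFaa C f) (x0 : C.Hom Z A) {ι : Type*} (v : ι → C.Hom Z A) :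
    f.evalFinset x0 v ∅ = C.comp (f 0) x0 :=
  (hf.eval_comp_eq_evalFinset x0 v (e := Fin.elim0) (fun i => i.elim0) (by simp)).symm

lemma eval_eq_evalFinset_univ (hf : IsFaa C f) (x0 : C.Hom Z A) {m : ℕ} (v : Fin m → C.Hom Z A) :
    f.eval x0 v = f.evalFinset x0 v univ :=
  hf.eval_comp_eq_evalFinset x0 v injective_id (by simp)

lemma isLinearMap_evalFinset_update (hf : IsFaa C f) (x0 : C.Hom Z A) {ι : Type*} [DecidableEq ι]
    (v : ι → C.Hom Z A) {a : ι} {s : Finset ι} (ha : a ∈ s) :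
    IsLinearMap k fun w => f.evalFinset x0 (update v a w) s := by
  obtain ⟨j, rfl⟩ := exists_toList_get_eq ha
  show IsLinearMap k fun w => f.eval x0 (update v (s.toList.get j) w ∘ s.toList.get)
  simp only [update_comp_eq_of_injective v s.toList_get_injective]
  exact hf.isLinearMap_eval_update x0 _ j

lemma evalFinset_eq_zero (hf : IsFaa C f) (x0 : C.Hom Z A) {ι : Type*} [DecidableEq ι]
    {v : ι → C.Hom Z A} {a : ι} {s : Finset ι} (ha : a ∈ s) (h0 : v a = 0) :
    f.evalFinset x0 v s = 0 := by
  calc f.evalFinset x0 v s = f.evalFinset x0 (update v a 0) s := by rw [← h0, update_eq_self]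
    _ = 0 := (hf.isLinearMap_evalFinset_update x0 v ha).map_zero

lemma evalFinset_sum (hf : IsFaa C f) (x0 : C.Hom Z A) {ι β : Type*} (t : ι → Finset β)
    (u : β → C.Hom Z A) (s : Finset ι) :
    f.evalFinset x0 (fun a => ∑ b ∈ t a, u b) s =
      ∑ c ∈ Fintype.piFinset fun j => t (s.toList.get j), f.eval x0 (u ∘ c) :=
  (hf.evalMultilinear x0 _).map_sum_finset (fun _ b => u b) (fun j => t (s.toList.get j))

end IsFaa

section FaaComp

variable {D : C.Obj} {g : FaaHom C B D} {f : FaaHom C A B}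

lemma comp_fIdxF_tupleD (hf : IsFaa C f) (x0 : C.Hom Z A) {n : ℕ} (v : Fin n → C.Hom Z A)
    (T : Finset (Fin n)) :
    C.comp (fIdxF C f n T) (C.tupleD n (Fin.cases x0 v)) = f.evalFinset x0 v T := by
  have h : C.comp (fIdxF C f n T) (C.tupleD n (Fin.cases x0 v)) =
      f.eval x0 (v ∘ T.orderEmbOfFin rfl) := by
    unfold fIdxF FaaHom.eval
    rw [C.comp_assoc, CLC.tupleD_comp, CLC.cases_comp]
    simp only [CLC.projD_comp_tupleD, coe_orderIsoOfFin_apply]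
    rfl
  rw [h]
  exact hf.eval_comp_eq_evalFinset x0 v (T.orderEmbOfFin rfl).injective (T.range_orderEmbOfFin rfl)

lemma eval_faaComp (hf : IsFaa C f) (x0 : C.Hom Z A) {n : ℕ} (v : Fin n → C.Hom Z A) :
    (faaComp C g f).eval x0 v = g.faaSum f x0 v univ := by
  unfold FaaHom.eval faaComp FaaHom.faaSum
  rw [CLC.sum_comp, partitions_eq_partitionsOf_univ]
  refine sum_congr rfl fun P _ => ?_
  rw [C.comp_assoc, CLC.tupleD_comp, CLC.cases_comp, comp_fIdxF_tupleD hf, hf.evalFinset_empty]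
  simp only [comp_fIdxF_tupleD hf]
  rfl

lemma faaSum_comp (hg : IsFaa C g) (hf : IsFaa C f) (x0 : C.Hom Z A) {ι κ : Type*}
    [DecidableEq ι] [DecidableEq κ] (v : κ → C.Hom Z A) {e : ι → κ} (he : Injective e)
    (S : Finset ι) : g.faaSum f x0 (v ∘ e) S = g.faaSum f x0 v (S.image e) := by
  have hfe : f.evalFinset x0 (v ∘ e) = f.evalFinset x0 v ∘ image e :=
    funext (hf.evalFinset_comp x0 v he)
  unfold FaaHom.faaSum
  simp only [hfe, hg.evalFinset_comp _ _ (image_injective he)]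
  exact sum_partitionsOf_image he S _

lemma evalFinset_faaComp (hg : IsFaa C g) (hf : IsFaa C f) (x0 : C.Hom Z A) {ι : Type*}
    [DecidableEq ι] (v : ι → C.Hom Z A) (S : Finset ι) :
    (faaComp C g f).evalFinset x0 v S = g.faaSum f x0 v S := by
  rw [FaaHom.evalFinset, eval_faaComp hf, ← comp_def, faaSum_comp hg hf x0 v S.toList_get_injective,
    S.image_toList_get_univ]

lemma comp_faaComp_zero (hg : IsFaa C g) (hf : IsFaa C f) (x0 : C.Hom Z A) :
    C.comp (faaComp C g f 0) x0 = C.comp (g 0) (C.comp (f 0) x0) := by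
  have h := eval_faaComp (g := g) hf x0 Fin.elim0
  rw [univ_eq_empty, FaaHom.faaSum, partitionsOf_empty, sum_singleton,
    hg.evalFinset_empty] at h
  exact h

lemma isLinearMap_faaSum_update (hg : IsFaa C g) (hf : IsFaa C f) (x0 : C.Hom Z A) {ι : Type*}
    [DecidableEq ι] (v : ι → C.Hom Z A) {a : ι} {S : Finset ι} (ha : a ∈ S) :
    IsLinearMap k fun w => g.faaSum f x0 (update v a w) S := by
  refine IsLinearMap.finset_sum _ fun P hP => ?_
  obtain ⟨T₀, hT₀, haT₀⟩ := (mem_partitionsOf.mp hP).exists_mem a ha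
  have hblock : ∀ w, g.evalFinset (C.comp (f 0) x0) (f.evalFinset x0 (update v a w)) P =
      g.evalFinset (C.comp (f 0) x0)
        (update (f.evalFinset x0 v) T₀ (f.evalFinset x0 (update v a w) T₀)) P := fun w =>
    g.evalFinset_congr _ fun T hT => by
      rcases eq_or_ne T T₀ with rfl | hne
      · rw [update_self]
      · rw [update_of_ne hne]
        refine f.evalFinset_congr _ fun b hb => update_of_ne ?_ _ _
        rintro rfl
        exact hne ((mem_partitionsOf.mp hP).eq_of_mem hT hT₀ hb haT₀)
  simp only [hblock]
  exact (hg.isLinearMap_evalFinset_update _ _ hT₀).comp (hf.isLinearMap_evalFinset_update _ _ haT₀)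

lemma isFaa_faaComp (hg : IsFaa C g) (hf : IsFaa C f) : IsFaa C (faaComp C g f) := by
  refine isFaa_of_eval (fun m Z x0 v σ => ?_) (fun m Z x0 v i => ?_)
  · rw [eval_faaComp hf, eval_faaComp hf, faaSum_comp hg hf x0 v σ.injective,
      image_univ_equiv]
  · simp only [eval_faaComp hf]
    exact isLinearMap_faaSum_update hg hf x0 v (mem_univ i)

end FaaComp

section Identity

lemma idF_eq_zero (A : C.Obj) {m : ℕ} (h : 2 ≤ m) : idF C A m = 0 := by
  obtain ⟨m, rfl⟩ := Nat.exists_eq_add_of_le' h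
  rfl

lemma eval_idF_one (x0 : C.Hom Z A) (v : Fin 1 → C.Hom Z A) : (idF C A).eval x0 v = v 0 :=
  C.snd_pair _ _

lemma isFaa_idF (A : C.Obj) : IsFaa C (idF C A) := by
  refine isFaa_of_eval (fun m Z x0 v σ => ?_) (fun m Z x0 v i => ?_)
  · match m with
    | 0 => congr; funext i; exact i.elim0
    | 1 => rw [eval_idF_one, eval_idF_one, comp_apply, Fin.eq_zero (σ 0)]
    | m + 2 => simp only [FaaHom.eval, idF_eq_zero A (Nat.le_add_left 2 m), C.zero_comp]
  · match m with
    | 0 => exact i.elim0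
    | 1 =>
      simp only [eval_idF_one, Fin.eq_zero i, update_self]
      exact LinearMap.id.isLinear
    | m + 2 =>
      simp only [FaaHom.eval, idF_eq_zero A (Nat.le_add_left 2 m), C.zero_comp]
      exact (0 : C.Hom Z A →ₗ[k] C.Hom Z A).isLinear

lemma evalFinset_idF_singleton {ι : Type*} (x0 : C.Hom Z A) (v : ι → C.Hom Z A) (a : ι) :
    (idF C A).evalFinset x0 v {a} = v a := by
  rw [← (isFaa_idF A).eval_comp_eq_evalFinset x0 v (e := fun _ : Fin 1 => a)
    (fun i j _ => Subsingleton.elim i j) (by simp), eval_idF_one]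
  rfl

lemma evalFinset_idF_of_two_le_card {ι : Type*} (x0 : C.Hom Z A) (v : ι → C.Hom Z A)
    {T : Finset ι} (hT : 2 ≤ T.card) : (idF C A).evalFinset x0 v T = 0 := by
  rw [FaaHom.evalFinset, FaaHom.eval, idF_eq_zero A (by rwa [length_toList]), C.zero_comp]

variable {f : FaaHom C A B}

lemma faaSum_idF_left (hf : IsFaa C f) (x0 : C.Hom Z A) {ι : Type*} [DecidableEq ι]
    (v : ι → C.Hom Z A) (S : Finset ι) : (idF C B).faaSum f x0 v S = f.evalFinset x0 v S := by
  rcases S.eq_empty_or_nonempty with rfl | hS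
  · rw [FaaHom.faaSum, partitionsOf_empty, sum_singleton, (isFaa_idF B).evalFinset_empty,
      hf.evalFinset_empty]
    exact C.id_comp _
  · rw [FaaHom.faaSum, sum_eq_single_of_mem {S} (mem_partitionsOf.mpr
      (isPartitionOf_singleton hS)) fun P hP hne => evalFinset_idF_of_two_le_card _ _
        ((mem_partitionsOf.mp hP).two_le_card hS hne)]
    exact evalFinset_idF_singleton _ _ S

lemma faaSum_idF_right (hf : IsFaa C f) (x0 : C.Hom Z A) {ι : Type*} [DecidableEq ι]
    (v : ι → C.Hom Z A) (S : Finset ι) : f.faaSum (idF C A) x0 v S = f.evalFinset x0 v S := by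
  rw [FaaHom.faaSum, sum_eq_single_of_mem (S.image singleton)
    (mem_partitionsOf.mpr (isPartitionOf_image_singleton S)) fun P hP hne => ?_]
  · rw [← hf.evalFinset_comp _ _ singleton_injective]
    congr 1
    · exact C.id_comp x0
    · funext a
      exact evalFinset_idF_singleton x0 v a
  · obtain ⟨T, hT, h2⟩ := (mem_partitionsOf.mp hP).exists_two_le_card hne
    exact hf.evalFinset_eq_zero _ hT (evalFinset_idF_of_two_le_card x0 v h2)

lemma faaComp_idF_left (hf : IsFaa C f) : faaComp C (idF C B) f = f :=
  funext fun _ => CLC.hom_ext_dom fun _ x0 v => by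
    rw [← FaaHom.eval, eval_faaComp hf, faaSum_idF_left hf, ← hf.eval_eq_evalFinset_univ]
    rfl

lemma faaComp_idF_right (hf : IsFaa C f) : faaComp C f (idF C A) = f :=
  funext fun _ => CLC.hom_ext_dom fun _ x0 v => by
    rw [← FaaHom.eval, eval_faaComp (isFaa_idF A), faaSum_idF_right hf,
      ← hf.eval_eq_evalFinset_univ]
    rfl

end Identity

section Assoc

variable {D E : C.Obj} {h : FaaHom C D E} {g : FaaHom C B D} {f : FaaHom C A B}

lemma faaSum_faaComp_left (hh : IsFaa C h) (hg : IsFaa C g) (x0 : C.Hom Z A) {ι : Type*}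
    [DecidableEq ι] (v : ι → C.Hom Z A) (S : Finset ι) :
    (faaComp C h g).faaSum f x0 v S = ∑ P ∈ partitionsOf S, ∑ Q ∈ partitionsOf P,
      h.evalFinset (C.comp (g 0) (C.comp (f 0) x0))
        (g.evalFinset (C.comp (f 0) x0) (f.evalFinset x0 v)) Q :=
  sum_congr rfl fun P _ => evalFinset_faaComp hh hg _ _ P

lemma faaSum_faaComp_right (hh : IsFaa C h) (hg : IsFaa C g) (hf : IsFaa C f) (x0 : C.Hom Z A)
    {ι : Type*} [DecidableEq ι] (v : ι → C.Hom Z A) (S : Finset ι) :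
    h.faaSum (faaComp C g f) x0 v S = ∑ R ∈ partitionsOf S, ∑ c ∈ Fintype.piFinset
        (fun j : Fin R.toList.length => partitionsOf (R.toList.get j)),
      h.evalFinset (C.comp (g 0) (C.comp (f 0) x0))
        (g.evalFinset (C.comp (f 0) x0) (f.evalFinset x0 v)) (univ.image c) := by
  have hgf : (faaComp C g f).evalFinset x0 v =
      fun T => ∑ P ∈ partitionsOf T, g.evalFinset (C.comp (f 0) x0) (f.evalFinset x0 v) P :=
    funext (evalFinset_faaComp hg hf x0 v)
  refine sum_congr rfl fun R _ => ?_
  rw [comp_faaComp_zero hg hf, hgf, hh.evalFinset_sum]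
  refine sum_congr rfl fun c hc => ?_
  have hc' : ∀ j, IsPartitionOf (c j) (R.toList.get j) := fun j =>
    mem_partitionsOf.mp (Fintype.mem_piFinset.mp hc j)
  exact hh.eval_comp_eq_evalFinset _ _ (injective_of_isPartitionOf_toList_get hc') (by simp)

lemma faaComp_assoc (hh : IsFaa C h) (hg : IsFaa C g) (hf : IsFaa C f) :
    faaComp C (faaComp C h g) f = faaComp C h (faaComp C g f) :=
  funext fun _ => CLC.hom_ext_dom fun _ x0 v => by
    rw [← FaaHom.eval, ← FaaHom.eval, eval_faaComp hf, eval_faaComp (isFaa_faaComp hg hf),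
      faaSum_faaComp_left hh hg, faaSum_faaComp_right hh hg hf, sum_partitionsOf_piFinset]

end Assoc

theorem statement7 {k : Type u} [CommSemiring k] (C : CLC k) :
    (∀ (A B Cb : C.Obj) (g : FaaHom C B Cb) (f : FaaHom C A B),
        IsFaa C g → IsFaa C f → IsFaa C (faaComp C g f)) ∧
    (∀ A : C.Obj, IsFaa C (idF C A)) ∧
    (∀ (A B : C.Obj) (f : FaaHom C A B), IsFaa C f → faaComp C (idF C B) f = f) ∧
    (∀ (A B : C.Obj) (f : FaaHom C A B), IsFaa C f → faaComp C f (idF C A) = f) ∧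
    (∀ (A B Cb Db : C.Obj) (h : FaaHom C Cb Db) (g : FaaHom C B Cb)
        (f : FaaHom C A B), IsFaa C h → IsFaa C g → IsFaa C f →
        faaComp C (faaComp C h g) f = faaComp C h (faaComp C g f)) :=
  ⟨fun _ _ _ _ _ hg hf => isFaa_faaComp hg hf,
   isFaa_idF,
   fun _ _ _ hf => faaComp_idF_left hf,
   fun _ _ _ hf => faaComp_idF_right hf,
   fun _ _ _ _ _ _ _ hh hg hf => faaComp_assoc hh hg hf⟩
end

section
/- Let (𝒱, ⊗, I) be a monoidal category and (!, ε, δ, m_⊗, m_I) a monoidal comonad on 𝒱. Then 𝒱 with unit I, tensor A ⊗^! B := A ⊗ !B, associator (A ⊗ !B) ⊗ !C → A ⊗ !(B ⊗ !C) given by α followed by 1 ⊗ H (where H = m_⊗ ∘ (1 ⊗ δ) is the fusion operator), left unitor ε ∘ λ, and right unitor (1 ⊗ m_I) ∘ ρ, is a (right-)skew monoidal category. -/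
universe v u

open CategoryTheory MonoidalCategory

variable (V : Type u) [Category.{v} V] [MonoidalCategory V]

/-- A (symmetric-free) monoidal comonad `(!, ε, δ, m_⊗, m_I)` on a monoidal
category `V`: a comonad whose underlying functor is lax monoidal, and whose
counit and comultiplication are monoidal natural transformations. -/
structure MonComonad where
  Q : V ⥤ V
  ε : Q ⟶ 𝟭 V
  δ : Q ⟶ Q ⋙ Q
  counit_left : ∀ X, δ.app X ≫ ε.app (Q.obj X) = 𝟙 (Q.obj X)
  counit_right : ∀ X, δ.app X ≫ Q.map (ε.app X) = 𝟙 (Q.obj X)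
  coassoc : ∀ X, δ.app X ≫ δ.app (Q.obj X) = δ.app X ≫ Q.map (δ.app X)
  mI : 𝟙_ V ⟶ Q.obj (𝟙_ V)
  mT : ∀ X Y, Q.obj X ⊗ Q.obj Y ⟶ Q.obj (X ⊗ Y)
  mT_natural : ∀ {X X' Y Y'} (f : X ⟶ X') (g : Y ⟶ Y'),
    (Q.map f ⊗ₘ Q.map g) ≫ mT X' Y' = mT X Y ≫ Q.map (f ⊗ₘ g)
  lax_assoc : ∀ X Y Z,
    (mT X Y ⊗ₘ 𝟙 (Q.obj Z)) ≫ mT (X ⊗ Y) Z ≫ Q.map (α_ X Y Z).hom =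
      (α_ (Q.obj X) (Q.obj Y) (Q.obj Z)).hom ≫ (𝟙 (Q.obj X) ⊗ₘ mT Y Z) ≫
        mT X (Y ⊗ Z)
  lax_left_unit : ∀ X,
    (λ_ (Q.obj X)).hom = (mI ⊗ₘ 𝟙 (Q.obj X)) ≫ mT (𝟙_ V) X ≫ Q.map (λ_ X).hom
  lax_right_unit : ∀ X,
    (ρ_ (Q.obj X)).hom = (𝟙 (Q.obj X) ⊗ₘ mI) ≫ mT X (𝟙_ V) ≫ Q.map (ρ_ X).hom
  ε_mI : mI ≫ ε.app (𝟙_ V) = 𝟙 (𝟙_ V)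
  ε_mT : ∀ X Y, mT X Y ≫ ε.app (X ⊗ Y) = (ε.app X ⊗ₘ ε.app Y)
  δ_mI : mI ≫ δ.app (𝟙_ V) = mI ≫ Q.map mI
  δ_mT : ∀ X Y, mT X Y ≫ δ.app (X ⊗ Y) =
    (δ.app X ⊗ₘ δ.app Y) ≫ mT (Q.obj X) (Q.obj Y) ≫ Q.map (mT X Y)

variable {V}

namespace MonComonad

variable (M : MonComonad V)

/-- The warped tensor `A ⊗^! B := A ⊗ !B`. -/
def tW (A B : V) : V := A ⊗ M.Q.obj B

/-- The warped tensor of morphisms: `f ⊗ !g`. -/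
def hW {A B X Y : V} (f : A ⟶ B) (g : X ⟶ Y) : M.tW A X ⟶ M.tW B Y :=
  f ⊗ₘ M.Q.map g

/-- The fusion operator `H = m_⊗ ∘ (1 ⊗ δ) : !A ⊗ !B ⟶ !(A ⊗ !B)`. -/
def fus (A B : V) : M.Q.obj A ⊗ M.Q.obj B ⟶ M.Q.obj (M.tW A B) :=
  (𝟙 (M.Q.obj A) ⊗ₘ M.δ.app B) ≫ M.mT A (M.Q.obj B)

/-- The warped associator `α` followed by `1 ⊗ H`. -/
def aW (A B C : V) : M.tW (M.tW A B) C ⟶ M.tW A (M.tW B C) :=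
  (α_ A (M.Q.obj B) (M.Q.obj C)).hom ≫ (𝟙 A ⊗ₘ M.fus B C)

/-- The warped left unitor `ε ∘ λ`. -/
def lW (A : V) : M.tW (𝟙_ V) A ⟶ A := (λ_ (M.Q.obj A)).hom ≫ M.ε.app A

/-- The warped right unitor `(1 ⊗ m_I) ∘ ρ` (in Mathlib the canonical map `A ⟶ A ⊗ 𝟙_V` is `(ρ_ A).inv`). -/
def rW (A : V) : A ⟶ M.tW A (𝟙_ V) := (ρ_ A).inv ≫ (𝟙 A ⊗ₘ M.mI)

end MonComonad

/-!
STATEMENT 11: Let `(𝒱, ⊗, I)` be a monoidal category and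
`(!, ε, δ, m_⊗, m_I)` a monoidal comonad on `𝒱`. Then `𝒱` with unit `I`,
tensor `A ⊗^! B := A ⊗ !B`, associator `(A ⊗ !B) ⊗ !C → A ⊗ !(B ⊗ !C)` given
by `α` followed by `1 ⊗ H` (where `H = m_⊗ ∘ (1 ⊗ δ)` is the fusion operator),
left unitor `ε ∘ λ`, and right unitor `(1 ⊗ m_I) ∘ ρ`, is a (right-)skew
monoidal category: the constraints are natural and satisfy the pentagon axiom,
`λ_I ∘ ρ_I = 1`, and the three (skew-oriented) unit axioms.
-/

/-! The fusion operator `H` satisfies an associativity law,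
`(H ▷ !C) ≫ H ≫ !(α ≫ A ◁ H) = α ≫ (!A ◁ H) ≫ H`, which comes from the lax
associativity of `m_⊗` together with the coassociativity of `δ` and the fact that
`δ` is monoidal; it is compatible with `ε` (`H ≫ ε = ε ▷ !B`) and with `m_I` on
either side. Up to coherence, the pentagon and each unit axiom of the skew
structure is the whiskering `A ◁ -` of one of these laws. -/

namespace MonComonad

variable (M : MonComonad V)

-- lets rewriting see through the warped tensor in the types of `fus`, `aW`, `lW`, `rW`
attribute [reducible] tW

lemma fus_eq (A B : V) : M.fus A B = M.Q.obj A ◁ M.δ.app B ≫ M.mT A (M.Q.obj B) := by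
  rw [fus, id_tensorHom]

lemma aW_eq (A B C : V) : M.aW A B C = (α_ A (M.Q.obj B) (M.Q.obj C)).hom ≫ A ◁ M.fus B C := by
  rw [aW, id_tensorHom]

lemma rW_eq (A : V) : M.rW A = (ρ_ A).inv ≫ A ◁ M.mI := by
  rw [rW, id_tensorHom]

lemma mT_whiskerLeft (X : V) {Y Y' : V} (g : Y ⟶ Y') :
    M.Q.obj X ◁ M.Q.map g ≫ M.mT X Y' = M.mT X Y ≫ M.Q.map (X ◁ g) := by
  simpa using M.mT_natural (𝟙 X) g

lemma mT_associativity (X Y Z : V) :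
    M.mT X Y ▷ M.Q.obj Z ≫ M.mT (X ⊗ Y) Z ≫ M.Q.map (α_ X Y Z).hom =
      (α_ (M.Q.obj X) (M.Q.obj Y) (M.Q.obj Z)).hom ≫ M.Q.obj X ◁ M.mT Y Z ≫
        M.mT X (Y ⊗ Z) := by
  simpa using M.lax_assoc X Y Z

lemma mI_whiskerRight_comp_mT (X : V) :
    M.mI ▷ M.Q.obj X ≫ M.mT (𝟙_ V) X ≫ M.Q.map (λ_ X).hom = (λ_ (M.Q.obj X)).hom := by
  rw [lax_left_unit, tensorHom_id]

lemma rightUnitor_inv_comp_mT (X : V) :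
    (ρ_ (M.Q.obj X)).inv ≫ M.Q.obj X ◁ M.mI ≫ M.mT X (𝟙_ V) = M.Q.map (ρ_ X).inv := by
  rw [← cancel_mono (M.Q.map (ρ_ X).hom), ← M.Q.map_comp, Iso.inv_hom_id, M.Q.map_id,
    Category.assoc, Category.assoc, ← id_tensorHom, ← lax_right_unit, Iso.inv_hom_id]

lemma fus_natural {A A' B B' : V} (f : A ⟶ A') (g : B ⟶ B') :
    (M.Q.map f ⊗ₘ M.Q.map g) ≫ M.fus A' B' = M.fus A B ≫ M.Q.map (M.hW f g) := by
  rw [fus, fus, hW, tensorHom_comp_tensorHom_assoc, Category.comp_id, M.δ.naturality,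
    ← Category.id_comp (M.Q.map f), ← tensorHom_comp_tensorHom_assoc]
  dsimp only [Functor.comp_map]
  rw [M.mT_natural, Category.assoc]

lemma fus_comp_ε (A B : V) :
    M.fus A B ≫ M.ε.app (M.tW A B) = M.ε.app A ▷ M.Q.obj B := by
  rw [fus, Category.assoc, ε_mT, tensorHom_comp_tensorHom, Category.id_comp, counit_left,
    tensorHom_id]

lemma fus_comp_δ (A B : V) :
    M.fus A B ≫ M.δ.app (M.tW A B) =
      (M.δ.app A ⊗ₘ M.δ.app B) ≫ M.mT (M.Q.obj A) (M.Q.obj B) ≫ M.Q.map (M.fus A B) := by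
  rw [fus_eq, Category.assoc, δ_mT, whiskerLeft_comp_tensorHom_assoc, coassoc,
    ← tensorHom_comp_whiskerLeft_assoc]
  dsimp only [Functor.comp_obj]
  rw [reassoc_of% M.mT_whiskerLeft, M.Q.map_comp]

lemma fus_assoc (A B C : V) :
    M.fus A B ▷ M.Q.obj C ≫ M.fus (M.tW A B) C ≫ M.Q.map (M.aW A B C) =
      (α_ (M.Q.obj A) (M.Q.obj B) (M.Q.obj C)).hom ≫
        M.Q.obj A ◁ M.fus B C ≫ M.fus A (M.tW B C) := by
  calc _ = (M.Q.obj A ◁ M.δ.app B) ▷ M.Q.obj C ≫ _ ◁ M.δ.app C ≫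
        M.mT A (M.Q.obj B) ▷ _ ≫ M.mT _ _ ≫ M.Q.map (α_ A (M.Q.obj B) (M.Q.obj C)).hom ≫
        M.Q.map (A ◁ M.fus B C) := by
        rw [fus_eq, fus_eq, aW_eq, comp_whiskerRight_assoc, Category.assoc,
          whisker_exchange_assoc, M.Q.map_comp]
    _ = (M.Q.obj A ◁ M.δ.app B) ▷ M.Q.obj C ≫ _ ◁ M.δ.app C ≫
        (α_ _ _ _).hom ≫ M.Q.obj A ◁ M.mT _ _ ≫ M.mT A _ ≫ M.Q.map (A ◁ M.fus B C) := by
        dsimp only [Functor.comp_obj]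
        rw [reassoc_of% M.mT_associativity]
    _ = (α_ _ _ _).hom ≫ M.Q.obj A ◁ ((M.δ.app B ⊗ₘ M.δ.app C) ≫ M.mT _ _ ≫
        M.Q.map (M.fus B C)) ≫ M.mT A _ := by
        rw [← mT_whiskerLeft, MonoidalCategory.tensorHom_def]
        monoidal
    _ = _ := by
        rw [← fus_comp_δ, fus_eq, fus_eq, MonoidalCategory.whiskerLeft_comp_assoc]

lemma fus_unit_left (B : V) :
    (λ_ (M.Q.obj B)).inv ≫ M.mI ▷ M.Q.obj B ≫ M.fus (𝟙_ V) B ≫ M.Q.map (M.lW B) =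
      𝟙 (M.Q.obj B) := by
  rw [fus_eq, lW, M.Q.map_comp, Category.assoc, ← whisker_exchange_assoc]
  dsimp only [Functor.comp_obj]
  rw [reassoc_of% M.mI_whiskerRight_comp_mT, leftUnitor_naturality_assoc, Iso.inv_hom_id_assoc,
    counit_right]

lemma fus_unit_right (B : V) :
    (ρ_ (M.Q.obj B)).inv ≫ M.Q.obj B ◁ M.mI ≫ M.fus B (𝟙_ V) = M.Q.map (M.rW B) := by
  rw [fus_eq, ← MonoidalCategory.whiskerLeft_comp_assoc, δ_mI,
    MonoidalCategory.whiskerLeft_comp_assoc, mT_whiskerLeft,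
    reassoc_of% M.rightUnitor_inv_comp_mT, rW_eq, M.Q.map_comp]

lemma aW_natural {A A' B B' C C' : V} (f : A ⟶ A') (g : B ⟶ B') (h : C ⟶ C') :
    M.hW (M.hW f g) h ≫ M.aW A' B' C' = M.aW A B C ≫ M.hW f (M.hW g h) := by
  rw [aW_eq, aW_eq, hW, hW, hW, associator_naturality_assoc, tensorHom_comp_whiskerLeft,
    fus_natural, ← whiskerLeft_comp_tensorHom, Category.assoc]

lemma lW_natural {A B : V} (f : A ⟶ B) : M.hW (𝟙 (𝟙_ V)) f ≫ M.lW B = M.lW A ≫ f := by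
  simp [hW, lW]

lemma rW_natural {A B : V} (f : A ⟶ B) : f ≫ M.rW B = M.rW A ≫ M.hW f (𝟙 (𝟙_ V)) := by
  simp [hW, rW_eq, whisker_exchange]

lemma rW_unit_comp_lW_unit : M.rW (𝟙_ V) ≫ M.lW (𝟙_ V) = 𝟙 (𝟙_ V) := by
  simp [rW_eq, lW, ← unitors_inv_equal, ε_mI]

lemma aW_pentagon (A B C D : V) :
    M.hW (M.aW A B C) (𝟙 D) ≫ M.aW A (M.tW B C) D ≫ M.hW (𝟙 A) (M.aW B C D) =
      M.aW (M.tW A B) C D ≫ M.aW A B (M.tW C D) := by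
  calc _ = (α_ A (M.Q.obj B) (M.Q.obj C)).hom ▷ M.Q.obj D ≫ (α_ _ _ _).hom ≫
        A ◁ (M.fus B C ▷ M.Q.obj D ≫ M.fus (M.tW B C) D ≫ M.Q.map (M.aW B C D)) := by
        rw [hW, hW, M.aW_eq A B C, M.aW_eq A (M.tW B C) D, M.Q.map_id, id_tensorHom,
          tensorHom_id]
        monoidal
    _ = _ := by
        rw [fus_assoc, aW_eq, aW_eq]
        monoidal

lemma aW_comp_lW (A B : V) :
    M.aW (𝟙_ V) A B ≫ M.lW (M.tW A B) = M.hW (M.lW A) (𝟙 B) := by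
  rw [aW_eq, lW, lW, hW, M.Q.map_id, tensorHom_id, Category.assoc,
    leftUnitor_naturality_assoc, fus_comp_ε]
  monoidal

lemma rW_aW_lW_eq_id (A B : V) :
    M.hW (M.rW A) (𝟙 B) ≫ M.aW A (𝟙_ V) B ≫ M.hW (𝟙 A) (M.lW B) = 𝟙 (M.tW A B) := by
  calc _ = A ◁ ((λ_ (M.Q.obj B)).inv ≫ M.mI ▷ M.Q.obj B ≫ M.fus (𝟙_ V) B ≫
        M.Q.map (M.lW B)) := by
        rw [hW, hW, rW_eq, aW_eq, M.Q.map_id, id_tensorHom, tensorHom_id]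
        monoidal
    _ = _ := by rw [fus_unit_left, whiskerLeft_id]

lemma rW_comp_aW (A B : V) :
    M.rW (M.tW A B) ≫ M.aW A B (𝟙_ V) = M.hW (𝟙 A) (M.rW B) := by
  calc _ = A ◁ ((ρ_ (M.Q.obj B)).inv ≫ M.Q.obj B ◁ M.mI ≫ M.fus B (𝟙_ V)) := by
        rw [rW_eq, aW_eq]
        monoidal
    _ = _ := by rw [fus_unit_right, hW, id_tensorHom]

end MonComonad

theorem statement11 (M : MonComonad V) :
    -- naturality of the warped associator
    (∀ {A A' B B' C C' : V} (f : A ⟶ A') (g : B ⟶ B') (h : C ⟶ C'),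
      M.hW (M.hW f g) h ≫ M.aW A' B' C' = M.aW A B C ≫ M.hW f (M.hW g h)) ∧
    -- naturality of the warped unitors
    (∀ {A B : V} (f : A ⟶ B),
      M.hW (𝟙 (𝟙_ V)) f ≫ M.lW B = M.lW A ≫ f) ∧
    (∀ {A B : V} (f : A ⟶ B), f ≫ M.rW B = M.rW A ≫ M.hW f (𝟙 (𝟙_ V))) ∧
    -- the pentagon
    (∀ A B C D : V,
      M.hW (M.aW A B C) (𝟙 D) ≫ M.aW A (M.tW B C) D ≫
          M.hW (𝟙 A) (M.aW B C D) =
        M.aW (M.tW A B) C D ≫ M.aW A B (M.tW C D)) ∧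
    -- λ_I ∘ ρ_I = 1
    (M.rW (𝟙_ V) ≫ M.lW (𝟙_ V) = 𝟙 (𝟙_ V)) ∧
    -- the three unit axioms
    (∀ A B : V, M.aW (𝟙_ V) A B ≫ M.lW (M.tW A B) = M.hW (M.lW A) (𝟙 B)) ∧
    (∀ A B : V,
      M.hW (M.rW A) (𝟙 B) ≫ M.aW A (𝟙_ V) B ≫ M.hW (𝟙 A) (M.lW B) =
        𝟙 (M.tW A B)) ∧
    (∀ A B : V, M.rW (M.tW A B) ≫ M.aW A B (𝟙_ V) = M.hW (𝟙 A) (M.rW B)) := by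
  exact ⟨M.aW_natural, M.lW_natural, M.rW_natural, M.aW_pentagon, M.rW_unit_comp_lW_unit,
    M.aW_comp_lW, M.rW_aW_lW_eq_id, M.rW_comp_aW⟩
end

section
/- Let (M, +, 0) be a monoid. The category of sets with unit 1 = {∗}, tensor A ×^M B := A × M × B, λ(∗, m, b) = b, ρ(a) = (a, 0, ∗), and α((a,m,b), n, c) = (a, m+n, (b,n,c)), is a left closed skew monoidal category, with internal hom B ⇒^M C = C^(M × B). -/
universe u

/-- The warped tensor `A ×^M B := A × M × B` on the category of sets. -/
def tM (M : Type u) (A B : Type u) : Type u := A × M × B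

/-- Functorial action of `×^M`. -/
def mapM {M A A' B B' : Type u} (f : A → A') (g : B → B') :
    tM M A B → tM M A' B' := fun x => (f x.1, x.2.1, g x.2.2)

/-- The associator `((a,m,b),n,c) ↦ (a, m+n, (b,n,c))`. -/
def aM {M : Type u} [AddMonoid M] (A B C : Type u) :
    tM M (tM M A B) C → tM M A (tM M B C) :=
  fun x => (x.1.1, x.1.2.1 + x.2.1, (x.1.2.2, x.2.1, x.2.2))

/-- The left unitor `(∗, m, b) ↦ b`. -/
def lM {M : Type u} (B : Type u) : tM M PUnit B → B := fun x => x.2.2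

/-- The right unitor `a ↦ (a, 0, ∗)`. -/
def rM {M : Type u} [AddMonoid M] (A : Type u) : A → tM M A PUnit :=
  fun a => (a, 0, PUnit.unit)

/-!
Every constraint only moves the monoid labels around, so the pentagon is associativity of `+`
and the unit axioms that mix `α` with `ρ` are the unit laws `0 + m = m` and `m + 0 = m`; the
remaining axioms hold definitionally. Left closedness is currying, since `X ×^M A` is
`X × (M × A)`.
-/

section SkewMonoidal

variable {M : Type u} [AddMonoid M]

theorem aM_pentagon (A B C D : Type u) (x : tM M (tM M (tM M A B) C) D) :
    mapM (id : A → A) (aM B C D) (aM A (tM M B C) D (mapM (aM A B C) (id : D → D) x)) =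
      aM A B (tM M C D) (aM (tM M A B) C D x) := by
  obtain ⟨⟨⟨a, m, b⟩, n, c⟩, k, d⟩ := x
  show (a, m + n + k, b, n + k, c, k, d) = (a, m + (n + k), b, n + k, c, k, d)
  rw [add_assoc]

theorem mapM_lM_aM_mapM_rM (A B : Type u) (x : tM M A B) :
    mapM (id : A → A) (lM B) (aM A PUnit B (mapM (rM A) (id : B → B) x)) = x := by
  obtain ⟨a, m, b⟩ := x
  show (a, 0 + m, b) = (a, m, b)
  rw [zero_add]

theorem aM_rM (A B : Type u) (x : tM M A B) :
    aM A B PUnit (rM (tM M A B) x) = mapM (id : A → A) (rM B) x := by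
  obtain ⟨a, m, b⟩ := x
  show (a, m + 0, b, 0, PUnit.unit) = (a, m, b, 0, PUnit.unit)
  rw [add_zero]

variable (M) in
def tMCurry (X A C : Type u) : (tM M X A → C) ≃ (X → M × A → C) :=
  Equiv.curry X (M × A) C

end SkewMonoidal

theorem statement12 (M : Type u) [AddMonoid M] :
    -- naturality of α, λ, ρ
    (∀ {A A' B B' C C' : Type u} (f : A → A') (g : B → B') (h : C → C')
        (x : tM M (tM M A B) C),
      aM A' B' C' (mapM (mapM f g) h x) = mapM f (mapM g h) (aM A B C x)) ∧
    (∀ {B B' : Type u} (g : B → B') (x : tM M PUnit B),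
      lM B' (mapM id g x) = g (lM B x)) ∧
    (∀ {A A' : Type u} (f : A → A') (a : A),
      rM (M := M) A' (f a) = mapM f id (rM (M := M) A a)) ∧
    -- pentagon
    (∀ (A B C D : Type u) (x : tM M (tM M (tM M A B) C) D),
      mapM (id : A → A) (aM B C D)
          (aM A (tM M B C) D (mapM (aM A B C) (id : D → D) x)) =
        aM A B (tM M C D) (aM (tM M A B) C D x)) ∧
    -- λ_1 ∘ ρ_1 = 1
    (∀ x : PUnit.{u + 1}, lM (M := M) PUnit (rM (M := M) PUnit x) = x) ∧
    -- the three unit axioms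
    (∀ (A B : Type u) (x : tM M (tM M PUnit A) B),
      lM (tM M A B) (aM PUnit A B x) = mapM (lM A) (id : B → B) x) ∧
    (∀ (A B : Type u) (x : tM M A B),
      mapM (id : A → A) (lM B) (aM A PUnit B (mapM (rM A) (id : B → B) x)) =
        x) ∧
    (∀ (A B : Type u) (x : tM M A B),
      aM A B PUnit (rM (tM M A B) x) = mapM (id : A → A) (rM B) x) ∧
    -- left closure with internal hom `B ⇒^M C = C^(M × B)`
    (∀ A : Type u, ∃ e : ∀ (X C : Type u), (tM M X A → C) ≃ (X → M × A → C),
      (∀ (X X' C : Type u) (g : X' → X) (f : tM M X A → C),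
        e X' C (fun z => f (mapM g id z)) = fun x => e X C f (g x)) ∧
      (∀ (X C C' : Type u) (h : C → C') (f : tM M X A → C),
        e X C' (fun z => h (f z)) = fun x p => h (e X C f x p))) :=
  ⟨fun _ _ _ _ => rfl, fun _ _ => rfl, fun _ _ => rfl, aM_pentagon, fun _ => rfl,
    fun _ _ _ => rfl, mapM_lM_aM_mapM_rM, aM_rM,
    fun A => ⟨fun X C => tMCurry M X A C, fun _ _ _ _ _ => rfl, fun _ _ _ _ _ => rfl⟩⟩
end
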